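/- arXiv:2512.04993 — 9 statements merged into one kernel-verified Lean document; each statement's English description precedes it below -/
import Mathlib

section
/- Let G be a finite simple graph and let u, v be two distinct non-adjacent vertices of G. Then the clique number of Z_{u,v}(G) is at most the clique number of the induced subgraph of G on V(G) \ {u}; that is, ω(Z_{u,v}(G)) ≤ ω(G - u). -/
open SimpleGraph

/-- Zykov symmetrization `Z_{u,v}(G)`: delete all edges at `u` and join `u` to the
neighbors of `v`; all adjacencies among vertices other than `u` are unchanged. -/
def zykov {V : Type*} (G : SimpleGraph V) (u v : V) : SimpleGraph V where
  Adj a b :=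
    (a ≠ u ∧ b ≠ u ∧ G.Adj a b) ∨ (a = u ∧ b ≠ u ∧ G.Adj v b) ∨ (b = u ∧ a ≠ u ∧ G.Adj v a)
  symm := by
    constructor
    intro a b h
    rcases h with ⟨ha, hb, hab⟩ | ⟨ha, hb, hvb⟩ | ⟨hb, ha, hva⟩
    · exact Or.inl ⟨hb, ha, hab.symm⟩
    · exact Or.inr (Or.inr ⟨ha, hb, hvb⟩)
    · exact Or.inr (Or.inl ⟨hb, ha, hva⟩)
  loopless := by
    constructor
    intro a h
    rcases h with ⟨_, _, hab⟩ | ⟨ha, hb, _⟩ | ⟨hb, ha, _⟩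
    · exact (G.ne_of_adj hab) rfl
    · exact hb ha
    · exact ha hb

theorem stmt_3 {V : Type*} [Fintype V] (G : SimpleGraph V) (u v : V) (huv : u ≠ v)
    (hadj : ¬ G.Adj u v) :
    (zykov G u v).cliqueNum ≤ (G.induce ({u}ᶜ : Set V)).cliqueNum := by
  classical
  obtain ⟨s, hs⟩ := (zykov G u v).exists_isNClique_cliqueNum
  -- build a clique s' in G with u ∉ s' and same card
  have key : ∃ s' : Finset V, G.IsClique s' ∧ u ∉ s' ∧ s'.card = s.card := by
    by_cases hu : u ∈ s
    · have hv : v ∉ s := by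
        intro hv
        have := hs.isClique hu hv huv
        rcases this with ⟨ha, _, _⟩ | ⟨_, _, h⟩ | ⟨hb, _, _⟩
        · exact ha rfl
        · exact (G.ne_of_adj h) rfl
        · exact huv hb.symm
      refine ⟨insert v (s.erase u), ?_, ?_, ?_⟩
      · intro a ha b hb hab
        simp only [Finset.coe_insert, Set.mem_insert_iff, Finset.coe_erase,
          Set.mem_diff, Set.mem_singleton_iff, Finset.mem_coe, Finset.mem_erase] at ha hb
        rcases ha with rfl | ⟨has, hau⟩
        · rcases hb with rfl | ⟨hbs, hbu⟩
          · exact absurd rfl hab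
          · -- a = v, b ∈ s, b ≠ u : need G.Adj v b. u,b adjacent in zykov
            have := hs.isClique hu hbs (Ne.symm hbu)
            rcases this with ⟨ha', _, _⟩ | ⟨_, _, h⟩ | ⟨hb', _, _⟩
            · exact absurd rfl ha'
            · exact h
            · exact absurd hb' hbu
        · rcases hb with rfl | ⟨hbs, hbu⟩
          · have := hs.isClique hu has (Ne.symm hau)
            rcases this with ⟨ha', _, _⟩ | ⟨_, _, h⟩ | ⟨hb', _, _⟩
            · exact absurd rfl ha'
            · exact h.symm
            · exact absurd hb' hau
          · have := hs.isClique has hbs hab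
            rcases this with ⟨_, _, h⟩ | ⟨ha', _, _⟩ | ⟨hb', _, _⟩
            · exact h
            · exact absurd ha' hau
            · exact absurd hb' hbu
      · simp only [Finset.mem_insert, Finset.mem_erase]
        push_neg
        exact ⟨huv, fun h => absurd rfl h⟩
      · rw [Finset.card_insert_of_notMem (fun h => hv (Finset.mem_of_mem_erase h)),
          Finset.card_erase_of_mem hu]
        have := Finset.card_pos.mpr ⟨u, hu⟩
        omega
    · refine ⟨s, ?_, hu, rfl⟩
      intro a ha b hb hab
      have := hs.isClique ha hb hab
      rcases this with ⟨_, _, h⟩ | ⟨ha', _, _⟩ | ⟨hb', _, _⟩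
      · exact h
      · exact (hu (by rwa [ha'] at ha)).elim
      · exact (hu (by rwa [hb'] at hb)).elim
  obtain ⟨s', hc, hus, hcard⟩ := key
  -- lift to subtype
  let t : Finset ({u}ᶜ : Set V) := s'.subtype (· ∈ ({u}ᶜ : Set V))
  have htc : t.card = s'.card := by
    rw [Finset.card_subtype, Finset.filter_true_of_mem]
    intro x hx
    simp only [Set.mem_compl_iff, Set.mem_singleton_iff]
    exact fun h => hus (h ▸ hx)
  have htclique : (G.induce ({u}ᶜ : Set V)).IsClique t := by
    intro a ha b hb hab
    simp only [Finset.mem_coe, Finset.mem_subtype, t] at ha hb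
    exact hc ha hb (Subtype.coe_ne_coe.mpr hab)
  calc (zykov G u v).cliqueNum = s.card := hs.card_eq.symm
    _ = t.card := by rw [htc, hcard]
    _ ≤ _ := htclique.card_le_cliqueNum
end

section
/- Let ε > 0 and d ∈ (0,1), let k and m be positive integers with 1/k ≤ 2ε, and let G be a graph on n = k·m vertices whose vertex set is partitioned into k parts V₁, …, V_k, each of size m. Suppose the number of pairs {i,j} with 1 ≤ i < j ≤ k for which (V_i, V_j) is not ε-regular is at most εk². Let R be the graph on vertex set {1,…,k} in which i and j are adjacent if and only if the pair (V_i, V_j) is ε-regular and has density at least d. Then e(G) ≤ e(R)·n²/k² + (d/2 + 2ε)·n². -/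
open SimpleGraph Finset

set_option maxHeartbeats 1000000 in
theorem stmt_7 {V : Type*} [Fintype V] [DecidableEq V] (G : SimpleGraph V) [DecidableRel G.Adj]
    (ε d : ℝ) (hε : 0 < ε) (hd0 : 0 < d) (hd1 : d < 1)
    (k m : ℕ) (hk : 0 < k) (hm : 0 < m) (hkε : (1 : ℝ) / k ≤ 2 * ε)
    (P : Fin k → Finset V)
    (hdisj : ∀ i j, i ≠ j → Disjoint (P i) (P j))
    (hcover : Finset.univ.biUnion P = (Finset.univ : Finset V))
    (hsize : ∀ i, (P i).card = m)
    (hirr : ((Finset.univ.filter fun p : Fin k × Fin k =>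
        p.1 < p.2 ∧ ¬ G.IsUniform ε (P p.1) (P p.2)).card : ℝ) ≤ ε * (k : ℝ) ^ 2)
    (R : SimpleGraph (Fin k))
    (hR : ∀ i j, R.Adj i j ↔ i ≠ j ∧ G.IsUniform ε (P i) (P j) ∧
        d ≤ ((G.edgeDensity (P i) (P j) : ℚ) : ℝ)) :
    (G.edgeSet.ncard : ℝ) ≤ (R.edgeSet.ncard : ℝ) * ((k : ℝ) * m) ^ 2 / (k : ℝ) ^ 2
      + (d / 2 + 2 * ε) * ((k : ℝ) * m) ^ 2 := by
  classical
  have hkR : (0:ℝ) < k := by exact_mod_cast hk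
  have hmR : (0:ℝ) < m := by exact_mod_cast hm
  set f : Fin k × Fin k → ℝ :=
    fun ab => (#(Rel.interedges G.Adj (P ab.1) (P ab.2)) : ℝ) with hf
  have hfle : ∀ ab : Fin k × Fin k, f ab ≤ (m:ℝ) * m := by
    intro ab
    have h := Rel.card_interedges_le_mul G.Adj (P ab.1) (P ab.2)
    rw [hsize, hsize] at h
    have h2 : (#(Rel.interedges G.Adj (P ab.1) (P ab.2)) : ℝ) ≤ ((m * m : ℕ) : ℝ) := by
      exact_mod_cast h
    simp only [hf]
    push_cast at h2
    exact h2
  -- key: 2 e(G) = sum of f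
  have hkey : 2 * (#G.edgeFinset : ℝ) = ∑ ab : Fin k × Fin k, f ab := by
    have h0 : 2 * #G.edgeFinset = ∑ ab : Fin k × Fin k,
        #(Rel.interedges G.Adj (P ab.1) (P ab.2)) := by
      rw [two_mul_card_edgeFinset]
      have h1 : (univ.filter fun (x, y) => G.Adj x y) = Rel.interedges G.Adj univ univ := by
        rw [Rel.interedges, Finset.univ_product_univ]
      rw [h1, ← hcover, Rel.interedges_biUnion, Finset.card_biUnion, Finset.univ_product_univ]
      intro x hx y hy hxy
      rcases eq_or_ne x.1 y.1 with h | h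
      · have hne : x.2 ≠ y.2 := by
          intro h2; exact hxy (Prod.ext h h2)
        refine Finset.disjoint_left.2 fun a ha hb => ?_
        rw [Rel.mem_interedges_iff] at ha hb
        exact Finset.disjoint_left.1 (hdisj _ _ hne) ha.2.1 hb.2.1
      · refine Finset.disjoint_left.2 fun a ha hb => ?_
        rw [Rel.mem_interedges_iff] at ha hb
        exact Finset.disjoint_left.1 (hdisj _ _ h) ha.1 hb.1
    have h1 := congrArg (fun n : ℕ => (n : ℝ)) h0
    push_cast at h1
    simpa [hf] using h1
  -- split the sum
  have hsplit1 := Finset.sum_filter_add_sum_filter_not (univ : Finset (Fin k × Fin k))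
    (fun ab => R.Adj ab.1 ab.2) f
  set Rest := (univ : Finset (Fin k × Fin k)).filter fun ab => ¬ R.Adj ab.1 ab.2 with hRest
  have hsplit2 := Finset.sum_filter_add_sum_filter_not Rest (fun ab => ab.1 = ab.2) f
  set ND := Rest.filter fun ab => ¬ ab.1 = ab.2 with hND
  have hsplit3 := Finset.sum_filter_add_sum_filter_not ND
    (fun ab => G.IsUniform ε (P ab.1) (P ab.2)) f
  -- bound the R-adjacent part
  have hRcard : (#((univ : Finset (Fin k × Fin k)).filter fun ab => R.Adj ab.1 ab.2) : ℝ)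
      = 2 * (#R.edgeFinset : ℝ) := by
    have := R.two_mul_card_edgeFinset
    have h2 : (univ.filter fun (x, y) => R.Adj x y)
        = ((univ : Finset (Fin k × Fin k)).filter fun ab => R.Adj ab.1 ab.2) := by
      apply Finset.filter_congr; intro ab _; rfl
    rw [h2] at this
    rw [← this]
    push_cast
    ring
  have hbA : ∑ ab ∈ (univ : Finset (Fin k × Fin k)).filter (fun ab => R.Adj ab.1 ab.2), f ab
      ≤ 2 * (#R.edgeFinset : ℝ) * ((m:ℝ) * m) := by
    calc ∑ ab ∈ (univ : Finset (Fin k × Fin k)).filter (fun ab => R.Adj ab.1 ab.2), f ab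
        ≤ ∑ _ab ∈ (univ : Finset (Fin k × Fin k)).filter (fun ab => R.Adj ab.1 ab.2),
            ((m:ℝ) * m) := Finset.sum_le_sum fun ab _ => hfle ab
      _ = (#((univ : Finset (Fin k × Fin k)).filter fun ab => R.Adj ab.1 ab.2) : ℝ)
            * ((m:ℝ) * m) := by rw [Finset.sum_const, nsmul_eq_mul]
      _ = 2 * (#R.edgeFinset : ℝ) * ((m:ℝ) * m) := by rw [hRcard]
  -- diagonal part
  have hbD : ∑ ab ∈ Rest.filter (fun ab => ab.1 = ab.2), f ab
      ≤ (k:ℝ) * ((m:ℝ) * m) := by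
    have hcard : #(Rest.filter fun ab => ab.1 = ab.2) ≤ k := by
      have hinj : ((Rest.filter fun ab => ab.1 = ab.2 : Finset (Fin k × Fin k)) :
          Set (Fin k × Fin k)).InjOn Prod.fst := by
        intro a ha b hb hab
        simp only [coe_filter, Set.mem_setOf_eq] at ha hb
        exact Prod.ext hab (by rw [← ha.2, ← hb.2, hab])
      calc #(Rest.filter fun ab => ab.1 = ab.2)
          ≤ #(univ : Finset (Fin k)) := Finset.card_le_card_of_injOn _ (by simp) hinj
        _ = k := by simp
    calc ∑ ab ∈ Rest.filter (fun ab => ab.1 = ab.2), f ab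
        ≤ ∑ _ab ∈ Rest.filter (fun ab => ab.1 = ab.2), ((m:ℝ) * m) :=
          Finset.sum_le_sum fun ab _ => hfle ab
      _ = (#(Rest.filter fun ab => ab.1 = ab.2) : ℝ) * ((m:ℝ) * m) := by
          rw [Finset.sum_const, nsmul_eq_mul]
      _ ≤ (k:ℝ) * ((m:ℝ) * m) := by
          have : (#(Rest.filter fun ab => ab.1 = ab.2) : ℝ) ≤ (k:ℝ) := by exact_mod_cast hcard
          nlinarith [hmR]
  -- irregular part
  have hbI : ∑ ab ∈ ND.filter (fun ab => ¬ G.IsUniform ε (P ab.1) (P ab.2)), f ab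
      ≤ 2 * ε * (k:ℝ)^2 * ((m:ℝ) * m) := by
    set S1 := (univ : Finset (Fin k × Fin k)).filter fun p =>
      p.1 < p.2 ∧ ¬ G.IsUniform ε (P p.1) (P p.2) with hS1
    set S2 := (univ : Finset (Fin k × Fin k)).filter fun p =>
      p.2 < p.1 ∧ ¬ G.IsUniform ε (P p.1) (P p.2) with hS2
    have hsub : ND.filter (fun ab => ¬ G.IsUniform ε (P ab.1) (P ab.2)) ⊆ S1 ∪ S2 := by
      intro ab hab
      simp only [hND, hRest, mem_filter, mem_univ, true_and] at hab
      obtain ⟨⟨_, hne⟩, hnu⟩ := hab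
      rcases lt_or_gt_of_ne hne with h | h
      · exact Finset.mem_union_left _ (by simp [hS1, h, hnu])
      · exact Finset.mem_union_right _ (by simp [hS2, h, hnu])
    have hS2card : #S2 = #S1 := by
      apply Finset.card_bij (fun p _ => Prod.swap p)
      · intro p hp
        simp only [hS1, hS2, mem_filter, mem_univ, true_and, Prod.fst_swap,
          Prod.snd_swap] at hp ⊢
        exact ⟨hp.1, fun hu => hp.2 hu.symm⟩
      · intro p _ q _ hpq
        exact Prod.swap_injective hpq
      · intro p hp
        refine ⟨p.swap, ?_, Prod.swap_swap p⟩
        simp only [hS1, hS2, mem_filter, mem_univ, true_and, Prod.fst_swap,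
          Prod.snd_swap] at hp ⊢
        exact ⟨hp.1, fun hu => hp.2 hu.symm⟩
    have hcount : (#(ND.filter (fun ab => ¬ G.IsUniform ε (P ab.1) (P ab.2))) : ℝ)
        ≤ 2 * ε * (k:ℝ)^2 := by
      have h1 : #(ND.filter (fun ab => ¬ G.IsUniform ε (P ab.1) (P ab.2))) ≤ #S1 + #S2 :=
        (Finset.card_le_card hsub).trans (Finset.card_union_le _ _)
      have h2 : (#S1 : ℝ) ≤ ε * (k:ℝ)^2 := hirr
      have h3 : (#(ND.filter (fun ab => ¬ G.IsUniform ε (P ab.1) (P ab.2))) : ℝ)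
          ≤ (#S1 : ℝ) + (#S2 : ℝ) := by exact_mod_cast h1
      rw [hS2card] at h3
      linarith
    calc ∑ ab ∈ ND.filter (fun ab => ¬ G.IsUniform ε (P ab.1) (P ab.2)), f ab
        ≤ ∑ _ab ∈ ND.filter (fun ab => ¬ G.IsUniform ε (P ab.1) (P ab.2)), ((m:ℝ) * m) :=
          Finset.sum_le_sum fun ab _ => hfle ab
      _ = (#(ND.filter (fun ab => ¬ G.IsUniform ε (P ab.1) (P ab.2))) : ℝ) * ((m:ℝ) * m) := by
          rw [Finset.sum_const, nsmul_eq_mul]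
      _ ≤ 2 * ε * (k:ℝ)^2 * ((m:ℝ) * m) := by nlinarith [hmR]
  -- sparse regular part
  have hbS : ∑ ab ∈ ND.filter (fun ab => G.IsUniform ε (P ab.1) (P ab.2)), f ab
      ≤ (k:ℝ)^2 * (d * ((m:ℝ) * m)) := by
    have hpt : ∀ ab ∈ ND.filter (fun ab => G.IsUniform ε (P ab.1) (P ab.2)),
        f ab ≤ d * ((m:ℝ) * m) := by
      intro ab hab
      simp only [hND, hRest, mem_filter, mem_univ, true_and] at hab
      obtain ⟨⟨hnadj, hne⟩, hu⟩ := hab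
      have hdens : ((G.edgeDensity (P ab.1) (P ab.2) : ℚ) : ℝ) < d := by
        by_contra h
        exact hnadj ((hR ab.1 ab.2).2 ⟨hne, hu, le_of_not_gt h⟩)
      have heq : (f ab : ℝ) = ((G.edgeDensity (P ab.1) (P ab.2) : ℚ) : ℝ) * ((m:ℝ) * m) := by
        have h1 : (G.edgeDensity (P ab.1) (P ab.2) : ℚ)
            = (#(Rel.interedges G.Adj (P ab.1) (P ab.2)) : ℚ) / ((m:ℚ) * m) := by
          rw [SimpleGraph.edgeDensity, Rel.edgeDensity, hsize, hsize]
          try push_cast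
          try rfl
        have h2 : ((G.edgeDensity (P ab.1) (P ab.2) : ℚ) : ℝ)
            = (#(Rel.interedges G.Adj (P ab.1) (P ab.2)) : ℝ) / ((m:ℝ) * m) := by
          rw [h1]; push_cast; ring
        rw [hf, h2]
        field_simp
      rw [heq]
      nlinarith [hmR]
    calc ∑ ab ∈ ND.filter (fun ab => G.IsUniform ε (P ab.1) (P ab.2)), f ab
        ≤ ∑ _ab ∈ ND.filter (fun ab => G.IsUniform ε (P ab.1) (P ab.2)), (d * ((m:ℝ) * m)) :=
          Finset.sum_le_sum hpt
      _ = (#(ND.filter (fun ab => G.IsUniform ε (P ab.1) (P ab.2))) : ℝ) * (d * ((m:ℝ) * m)) := by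
          rw [Finset.sum_const, nsmul_eq_mul]
      _ ≤ (k:ℝ)^2 * (d * ((m:ℝ) * m)) := by
          have ha := Finset.card_filter_le ND (fun ab => G.IsUniform ε (P ab.1) (P ab.2))
          have hb := Finset.card_filter_le Rest (fun ab => ¬ ab.1 = ab.2)
          have hc := Finset.card_filter_le (univ : Finset (Fin k × Fin k))
            (fun ab => ¬ R.Adj ab.1 ab.2)
          rw [← hND] at hb
          rw [← hRest] at hc
          have hd : #(univ : Finset (Fin k × Fin k)) = k * k := by
            simp [Finset.card_univ]
          have h1 : #(ND.filter (fun ab => G.IsUniform ε (P ab.1) (P ab.2))) ≤ k * k := by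
            omega
          have h3 : (#(ND.filter (fun ab => G.IsUniform ε (P ab.1) (P ab.2))) : ℝ)
              ≤ (k:ℝ) * k := by exact_mod_cast h1
          have h4 : (0:ℝ) ≤ d * ((m:ℝ) * m) := by positivity
          calc (#(ND.filter (fun ab => G.IsUniform ε (P ab.1) (P ab.2))) : ℝ)
                * (d * ((m:ℝ) * m))
              ≤ ((k:ℝ) * k) * (d * ((m:ℝ) * m)) := mul_le_mul_of_nonneg_right h3 h4
            _ = (k:ℝ)^2 * (d * ((m:ℝ) * m)) := by ring
  -- assemble
  have htotal : 2 * (#G.edgeFinset : ℝ) ≤ 2 * (#R.edgeFinset : ℝ) * ((m:ℝ) * m)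
      + (k:ℝ) * ((m:ℝ) * m) + 2 * ε * (k:ℝ)^2 * ((m:ℝ) * m)
      + (k:ℝ)^2 * (d * ((m:ℝ) * m)) := by
    rw [hkey, ← hsplit1, ← hsplit2, ← hsplit3]
    linarith
  have hGn : (G.edgeSet.ncard : ℝ) = (#G.edgeFinset : ℝ) := by
    rw [Set.ncard_eq_toFinset_card']
    try simp [edgeFinset]
  have hRn : (R.edgeSet.ncard : ℝ) = (#R.edgeFinset : ℝ) := by
    rw [Set.ncard_eq_toFinset_card']
    try simp [edgeFinset]
  rw [hGn, hRn]
  have hkk : (k:ℝ) * 1 ≤ 2 * ε * ((k:ℝ) * k) := by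
    rw [div_le_iff₀ hkR] at hkε
    nlinarith
  have hk2 : (#R.edgeFinset : ℝ) * ((k:ℝ) * m)^2 / (k:ℝ)^2
      = (#R.edgeFinset : ℝ) * ((m:ℝ) * m) := by
    field_simp
  rw [hk2]
  have hkk2 : (k:ℝ) * ((m:ℝ) * m) ≤ 2 * ε * ((k:ℝ) * k) * ((m:ℝ) * m) :=
    mul_le_mul_of_nonneg_right (by linarith [hkk]) (by positivity)
  nlinarith [htotal, hkk2, hmR, hkR]
end

section
/- Let r and t be integers with 2 ≤ t ≤ r-1. Let G be a K_r-free graph on n vertices whose vertex set is partitioned as V(G) = A ∪ B with |A| = a. If the induced subgraph G[A] is K_t-free and a ≥ (t-1)n/(r-1), then e(G) ≤ e(T_{t-1}(a)) + e(T_{r-t}(n-a)) + a(n-a), i.e., e(G) is at most the number of edges of the join T_{t-1}(a) ∨ T_{r-t}(n-a). -/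
open SimpleGraph Finset

universe u
namespace Stmt8

def cnt (k m c : ℕ) : ℕ := #((Finset.range m).filter (fun v => v % k = c))

def SQ (k m : ℕ) : ℕ := ∑ c ∈ Finset.range k, (cnt k m c)^2

lemma cnt_succ (k m c : ℕ) : cnt k (m+1) c = cnt k m c + if m % k = c then 1 else 0 := by
  unfold cnt
  rw [Finset.range_add_one, Finset.filter_insert]
  split
  next h => rw [Finset.card_insert_of_notMem (by simp)]
  next h => omega

lemma cnt_zero (k c : ℕ) : cnt k 0 c = 0 := by simp [cnt]

lemma cnt_mod (k m : ℕ) (hk : 0 < k) : cnt k m (m % k) = m / k := by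
  unfold cnt
  have himg : ((Finset.range m).filter (fun v => v % k = m % k))
      = (Finset.range (m/k)).image (fun i => i*k + m % k) := by
    ext v
    simp only [Finset.mem_filter, Finset.mem_range, Finset.mem_image]
    constructor
    · rintro ⟨hvm, hmod⟩
      refine ⟨v / k, ?_, ?_⟩
      · by_contra hle
        push_neg at hle
        have h1 := Nat.mul_le_mul_left k hle
        have h2 := Nat.div_add_mod m k
        have h3 := Nat.div_add_mod v k
        omega
      · have h3 := Nat.div_add_mod v k
        calc v / k * k + m % k = k * (v/k) + v % k := by rw [hmod, Nat.mul_comm]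
        _ = v := h3
    · rintro ⟨i, hi, rfl⟩
      have h1 : (i+1)*k ≤ (m/k)*k := Nat.mul_le_mul_right k hi
      rw [add_mul, one_mul] at h1
      have h2 : (m/k)*k ≤ m := Nat.div_mul_le_self m k
      have h3 : m % k < k := Nat.mod_lt _ hk
      constructor
      · omega
      · have hmk : m % k % k = m % k := Nat.mod_eq_of_lt h3
        rw [Nat.add_mod, Nat.mul_mod_left, hmk]
        simp [hmk]
  rw [himg, Finset.card_image_of_injective _ (fun a b h => by
    have hab : a * k = b * k := by omega
    exact Nat.eq_of_mul_eq_mul_right hk hab)]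
  simp

lemma SQ_zero (k : ℕ) : SQ k 0 = 0 := by simp [SQ, cnt_zero]

lemma SQ_succ (k m : ℕ) (hk : 0 < k) : SQ k (m+1) = SQ k m + 2*(m/k) + 1 := by
  unfold SQ
  have h1 : ∀ c ∈ Finset.range k, (cnt k (m+1) c)^2
      = (cnt k m c)^2 + (if m % k = c then 2*(cnt k m c) + 1 else 0) := by
    intro c _
    rw [cnt_succ]
    split <;> ring
  rw [Finset.sum_congr rfl h1, Finset.sum_add_distrib]
  have h2 : ∑ c ∈ Finset.range k, (if m % k = c then 2*(cnt k m c) + 1 else 0)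
      = 2*(cnt k m (m % k)) + 1 := by
    rw [Finset.sum_ite_eq (Finset.range k) (m % k) (fun c => 2*(cnt k m c)+1)]
    simp [Nat.mod_lt _ hk]
  rw [h2, cnt_mod _ _ hk]
  ring

lemma SQ_le_sum_sq : ∀ (s j : ℕ) (x : Fin j → ℕ), (∑ i, x i) = s → SQ j s ≤ ∑ i, (x i)^2 := by
  intro s
  induction s using Nat.strong_induction_on with
  | _ s IH =>
    intro j x hs
    rcases Nat.eq_zero_or_pos s with h0 | hpos
    · subst h0; simp [SQ_zero]
    · obtain ⟨i0, -, hi0⟩ := Finset.exists_ne_zero_of_sum_ne_zero (f := x)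
        (s := Finset.univ) (by rw [hs]; omega)
      obtain ⟨i, -, hmax⟩ := Finset.exists_max_image Finset.univ x ⟨i0, Finset.mem_univ i0⟩
      have hxi : 1 ≤ x i := le_trans (Nat.one_le_iff_ne_zero.2 hi0) (hmax i0 (Finset.mem_univ i0))
      have hj : 0 < j := Fin.pos i
      have hjx : s ≤ j * x i := by
        rw [← hs]
        calc ∑ i', x i' ≤ (Finset.univ : Finset (Fin j)).card • x i :=
              Finset.sum_le_card_nsmul _ _ _ (fun a _ => hmax a (Finset.mem_univ a))
        _ = j * x i := by simp [mul_comm]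
      set a := x i - 1 with ha
      set x' := Function.update x i a with hx'
      have e0 : ∑ i', x i' = x i + ∑ z ∈ Finset.univ.erase i, x z :=
        (Finset.add_sum_erase _ x (Finset.mem_univ i)).symm
      have e0sq : ∑ i', (x i')^2 = (x i)^2 + ∑ z ∈ Finset.univ.erase i, (x z)^2 :=
        (Finset.add_sum_erase _ (fun z => (x z)^2) (Finset.mem_univ i)).symm
      have hsd : (Finset.univ : Finset (Fin j)) \ {i} = Finset.univ.erase i := by
        ext z; simp [Finset.mem_erase, and_comm]
      have e1 : ∑ i', x' i' = a + ∑ z ∈ Finset.univ.erase i, x z := by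
        rw [hx', Finset.sum_update_of_mem (Finset.mem_univ i), hsd]
      have e2 : ∑ i', (x' i')^2 = a^2 + ∑ z ∈ Finset.univ.erase i, (x z)^2 := by
        rw [hx']
        calc ∑ i', (Function.update x i a i')^2
            = ∑ i', Function.update (fun z => (x z)^2) i (a^2) i' :=
              Finset.sum_congr rfl (fun z _ => by
                rw [← Function.apply_update (fun _ v => v^2) x i a z])
        _ = a^2 + ∑ z ∈ Finset.univ \ {i}, (x z)^2 :=
              Finset.sum_update_of_mem (Finset.mem_univ i) _ _
        _ = a^2 + ∑ z ∈ Finset.univ.erase i, (x z)^2 := by rw [hsd]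
      have hxia : x i = a + 1 := by omega
      have hsum' : ∑ i', x' i' + 1 = s := by rw [e1, ← hs, e0]; omega
      have hsqx : (x i)^2 = a^2 + 2*a + 1 := by rw [hxia]; ring
      have hIH := IH (s-1) (by omega) j x' (by omega)
      have hstep : SQ j s = SQ j (s-1) + 2*((s-1)/j) + 1 := by
        have hss := SQ_succ j (s-1) hj
        have hs1 : s - 1 + 1 = s := by omega
        rw [hs1] at hss; omega
      have hdiv : (s-1)/j ≤ a := by
        have hlt : (s-1)/j < a + 1 := by
          rw [Nat.div_lt_iff_lt_mul hj]
          have hje : (a+1)*j = j * x i := by rw [hxia, mul_comm]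
          omega
        omega
      omega

def eT (m k : ℕ) : ℕ := (turanGraph m k).edgeFinset.card

lemma card_fin_mod (m k c : ℕ) :
    #(Finset.univ.filter (fun w : Fin m => (w:ℕ) % k = c)) = cnt k m c := by
  unfold cnt
  apply Finset.card_bij (fun (w : Fin m) _ => (w:ℕ))
  · intro w hw
    simp only [Finset.mem_filter, Finset.mem_univ, true_and] at hw
    simp [Finset.mem_filter, Finset.mem_range, w.isLt, hw]
  · intro w₁ _ w₂ _ h
    exact Fin.val_injective h
  · intro w hw
    simp only [Finset.mem_filter, Finset.mem_range] at hw
    exact ⟨⟨w, hw.1⟩, by simp [Finset.mem_filter, hw.2], rfl⟩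

lemma cnt_le (k m c : ℕ) : cnt k m c ≤ m :=
  le_trans (Finset.card_filter_le _ _) (by simp)

lemma two_eT (m k : ℕ) (hk : 0 < k) : 2 * eT m k + SQ k m = m^2 := by
  unfold eT
  rw [← SimpleGraph.sum_degrees_eq_twice_card_edges]
  have hdeg : ∀ v : Fin m, (turanGraph m k).degree v + cnt k m ((v:ℕ) % k) = m := by
    intro v
    rw [← SimpleGraph.card_neighborFinset_eq_degree, SimpleGraph.neighborFinset_eq_filter]
    have hsplit : (Finset.univ.filter (fun w => (turanGraph m k).Adj v w)) =
        Finset.univ \ (Finset.univ.filter (fun w : Fin m => (w:ℕ) % k = (v:ℕ) % k)) := by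
      ext w
      simp only [Finset.mem_filter, Finset.mem_univ, true_and, Finset.mem_sdiff]
      constructor <;> exact fun h hc => h hc.symm
    rw [hsplit, Finset.card_sdiff_of_subset (Finset.filter_subset _ _), card_fin_mod]
    have h1 := cnt_le k m ((v:ℕ) % k)
    simp only [Finset.card_univ, Fintype.card_fin]
    omega
  have hsum : ∑ v : Fin m, (turanGraph m k).degree v
      + ∑ v : Fin m, cnt k m ((v:ℕ) % k) = m * m := by
    rw [← Finset.sum_add_distrib]
    rw [Finset.sum_congr rfl (fun v _ => hdeg v)]
    simp [mul_comm]
  have hfib : ∑ v : Fin m, cnt k m ((v:ℕ) % k) = SQ k m := by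
    unfold SQ
    rw [← Finset.sum_fiberwise_of_maps_to
      (g := fun v : Fin m => (v:ℕ) % k) (s := Finset.univ) (t := Finset.range k)
      (fun v _ => Finset.mem_range.2 (Nat.mod_lt _ hk)) (fun v => cnt k m ((v:ℕ) % k))]
    apply Finset.sum_congr rfl
    intro c hc
    have : ∀ v ∈ Finset.univ.filter (fun v : Fin m => (v:ℕ) % k = c),
        cnt k m ((v:ℕ) % k) = cnt k m c := by
      intro v hv
      simp only [Finset.mem_filter] at hv
      rw [hv.2]
    rw [Finset.sum_congr rfl this, Finset.sum_const, card_fin_mod]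
    simp [pow_two]
  rw [hfib] at hsum
  rw [pow_two]
  exact hsum

lemma eT_succ (m k : ℕ) (hk : 0 < k) : eT (m+1) k = eT m k + (m - m/k) := by
  have h1 := two_eT m k hk
  have h2 := two_eT (m+1) k hk
  have h3 := SQ_succ k m hk
  have h4 : m/k ≤ m := Nat.div_le_self m k
  have h5 : (m+1)^2 = m^2 + 2*m + 1 := by ring
  omega

lemma div_key (t r s u a : ℕ) (ht : 2 ≤ t) (htr : t ≤ r - 1)
    (hra : (t-1)*(s+1+u) ≤ (r-1)*a) (has : a ≤ s) :
    u/(r-t) ≤ s/(t-1) := by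
  have hrt : 0 < r - t := by omega
  have ht1 : 0 < t - 1 := by omega
  have hsplit : r - 1 = (t-1) + (r-t) := by omega
  have h1 : (r-1)*a ≤ (r-1)*s := Nat.mul_le_mul_left _ has
  have h2 : (t-1)*(s+1+u) ≤ (t-1)*s + (r-t)*s := by
    calc (t-1)*(s+1+u) ≤ (r-1)*s := le_trans hra h1
    _ = (t-1)*s + (r-t)*s := by rw [hsplit, add_mul]
  have h3 : (t-1)*(1+u) ≤ (r-t)*s := by
    have : (t-1)*(s+1+u) = (t-1)*s + (t-1)*(1+u) := by ring
    omega
  set d := u/(r-t) with hd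
  have h4 : (r-t)*d ≤ u := by
    rw [hd, mul_comm]; exact Nat.div_mul_le_self u (r-t)
  have h5 : (t-1)*((r-t)*d) ≤ (t-1)*u := Nat.mul_le_mul_left _ h4
  have h6 : (t-1)*u ≤ (t-1)*(1+u) := Nat.mul_le_mul_left _ (by omega)
  have h7 : ((t-1)*d)*(r-t) ≤ s*(r-t) := by
    calc ((t-1)*d)*(r-t) = (t-1)*((r-t)*d) := by ring
    _ ≤ (r-t)*s := le_trans h5 (le_trans h6 h3)
    _ = s*(r-t) := mul_comm _ _
  have h8 : (t-1)*d ≤ s := Nat.le_of_mul_le_mul_right h7 hrt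
  rw [Nat.le_div_iff_mul_le ht1]
  calc d*(t-1) = (t-1)*d := mul_comm _ _
  _ ≤ s := h8

lemma chain (t r n a : ℕ) (ht : 2 ≤ t) (htr : t ≤ r - 1)
    (hra : (t-1)*n ≤ (r-1)*a) :
    ∀ s, a ≤ s → s ≤ n →
      eT s (t-1) + eT (n-s) (r-t) + s*(n-s)
        ≤ eT a (t-1) + eT (n-a) (r-t) + a*(n-a) := by
  intro s has
  induction s, has using Nat.le_induction with
  | base => intro _; exact le_refl _
  | succ s hs IH =>
    intro hsn
    have hsn' : s ≤ n := by omega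
    refine le_trans ?_ (IH hsn')
    set u := n - s - 1 with hu
    have hnu : n - (s+1) = u := by omega
    have hnsu : n - s = u + 1 := by omega
    rw [hnu, hnsu]
    have e1 : eT (s+1) (t-1) = eT s (t-1) + (s - s/(t-1)) := eT_succ s (t-1) (by omega)
    have e2 : eT (u+1) (r-t) = eT u (r-t) + (u - u/(r-t)) := eT_succ u (r-t) (by omega)
    rw [e1, e2]
    have hkey : u/(r-t) ≤ s/(t-1) := div_key t r s u a ht htr (by rw [show s+1+u = n by omega]; exact hra) hs
    have hd1 : s/(t-1) ≤ s := Nat.div_le_self _ _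
    have hd2 : u/(r-t) ≤ u := Nat.div_le_self _ _
    have hexp1 : (s+1)*u = s*u + u := by ring
    have hexp2 : s*(u+1) = s*u + s := by ring
    omega


lemma clique_in_induce {V : Type u} [DecidableEq V] {G : SimpleGraph V} {m : ℕ}
    {B s : Finset V} (hsub : s ⊆ B) (hs : G.IsClique (s : Set V)) (hcard : s.card = m) :
    ¬ (G.induce (B : Set V)).CliqueFree m := by
  intro hcf
  have hfinj : Function.Injective (fun z : {x // x ∈ s} => (⟨z.1, hsub z.2⟩ : (B : Set V))) := by
    intro a b h
    have h' := congrArg Subtype.val h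
    exact Subtype.ext h'
  apply hcf (s.attach.map ⟨_, hfinj⟩)
  constructor
  · intro u hu v hv huv
    simp only [Finset.mem_coe, Finset.mem_map, Finset.mem_attach, true_and,
      Function.Embedding.coeFn_mk] at hu hv
    obtain ⟨zu, hzu⟩ := hu
    obtain ⟨zv, hzv⟩ := hv
    have hu1 : (u : V) ∈ s := by rw [← hzu]; exact zu.2
    have hv1 : (v : V) ∈ s := by rw [← hzv]; exact zv.2
    show G.Adj (u : V) (v : V)
    exact hs (Finset.mem_coe.2 hu1) (Finset.mem_coe.2 hv1) (fun hc => huv (Subtype.ext hc))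
  · simp [hcard]

lemma card_fin_lt (N c : ℕ) (h : c ≤ N) :
    #(Finset.univ.filter (fun i : Fin N => (i : ℕ) < c)) = c := by
  have hb : #(Finset.univ.filter (fun i : Fin N => (i : ℕ) < c)) = #(Finset.range c) := by
    apply Finset.card_bij (fun (w : Fin N) _ => (w : ℕ))
    · intro w hw
      simp only [Finset.mem_filter, Finset.mem_univ, true_and] at hw
      exact Finset.mem_range.2 hw
    · intro a _ b _ hab
      exact Fin.val_injective hab
    · intro v hv
      have hv' := Finset.mem_range.1 hv
      exact ⟨⟨v, lt_of_lt_of_le hv' h⟩, by simp [hv'], rfl⟩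
  simpa using hb

lemma sum_ind_fin (N c : ℕ) (h : c ≤ N) :
    ∑ i : Fin N, (if (i : ℕ) < c then 1 else 0) = c := by
  rw [← Finset.card_filter]
  exact card_fin_lt N c h

lemma ncard_edgeSet {V : Type u} [Fintype V] (G : SimpleGraph V) [DecidableRel G.Adj] :
    G.edgeSet.ncard = G.edgeFinset.card := by
  rw [Set.ncard_eq_toFinset_card']
  congr 1

lemma pt_sq (a e : ℕ) (he : e ≤ 1) : (a + e)^2 ≤ a^2 + 2*a + e := by nlinarith

lemma wrap (E E' X2 Y2 X2' Y2' X Y m k' cx cy : ℕ)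
    (h1 : 2*E' + X2 + Y2 ≤ m^2)
    (h2 : 2*E ≤ 2*E' + (k'+1)*k' + 2*(m*k'))
    (h3 : X2' ≤ X2 + 2*X + cx)
    (h4 : Y2' ≤ Y2 + 2*Y + cy)
    (h5 : X + Y = m)
    (h6 : cx + cy = k'+1) :
    2*E + X2' + Y2' ≤ (m + k' + 1)^2 := by nlinarith

lemma lemA (r t : ℕ) (ht : 2 ≤ t) (htr : t ≤ r - 1) :
    ∀ (n : ℕ) (V : Type u) [Fintype V] [DecidableEq V] (G : SimpleGraph V) (A : Finset V),
      Fintype.card V = n → G.CliqueFree r → (G.induce (A : Set V)).CliqueFree t →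
      ∃ (x : Fin (t-1) → ℕ) (y : Fin (r-t) → ℕ),
        (∑ i, x i) + (∑ j, y j) = n ∧ A.card ≤ (∑ i, x i) ∧
        2 * G.edgeSet.ncard + (∑ i, (x i)^2) + (∑ j, (y j)^2) ≤ n^2 := by
  intro n
  induction n using Nat.strong_induction_on with
  | _ n IH =>
  intro V _ _ G A hcard hG hA
  classical
  rcases Nat.eq_zero_or_pos n with h0 | hpos
  · subst h0
    haveI hVempty : IsEmpty V := Fintype.card_eq_zero_iff.mp hcard
    refine ⟨fun _ => 0, fun _ => 0, by simp, ?_, ?_⟩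
    · have h1 : A.card ≤ Fintype.card V := by
        rw [← Finset.card_univ]; exact Finset.card_le_univ A
      simp only [Finset.sum_const_zero]
      omega
    · haveI : IsEmpty (Sym2 V) := ⟨fun z => Sym2.ind (fun a _ => (hVempty.false a).elim) z⟩
      have hE : G.edgeSet = ∅ := Set.eq_empty_of_isEmpty _
      simp [hE]
  -- main case
  · obtain ⟨v0⟩ := Fintype.card_pos_iff.mp (by omega : 0 < Fintype.card V)
    set CL := (Finset.univ : Finset V).powerset.filter (fun s : Finset V => G.IsClique (↑s : Set V)) with hCL
    have hv0mem : ({v0} : Finset V) ∈ CL := by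
      refine Finset.mem_filter.2 ⟨Finset.mem_powerset.2 (Finset.subset_univ _), ?_⟩
      rw [Finset.coe_singleton]
      exact G.isClique_singleton v0
    obtain ⟨K, hKmem, hKmax⟩ := Finset.exists_max_image CL Finset.card ⟨_, hv0mem⟩
    have hK : G.IsClique (K : Set V) := (Finset.mem_filter.mp hKmem).2
    set k := K.card with hk
    have hk1 : 1 ≤ k := by
      have := hKmax _ hv0mem
      simpa using this
    have hkn : k ≤ n := by
      rw [hk, ← hcard, ← Finset.card_univ]
      exact Finset.card_le_univ K
    have hr3 : 3 ≤ r := by omega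
    have hkr : k ≤ r - 1 := by
      by_contra hc
      push_neg at hc
      obtain ⟨K', hK'sub, hK'card⟩ := Finset.exists_subset_card_eq (s := K) (n := r) (by omega)
      exact hG K' ⟨hK.subset (Finset.coe_subset.2 hK'sub), hK'card⟩
    set p := (K ∩ A).card with hp
    have hpq : p + (K \ A).card = k := Finset.card_inter_add_card_sdiff K A
    have hpt : p ≤ t - 1 := by
      by_contra hc
      push_neg at hc
      obtain ⟨P, hPsub, hPcard⟩ := Finset.exists_subset_card_eq (s := K ∩ A) (n := t) (by omega)
      exact clique_in_induce (hPsub.trans Finset.inter_subset_right)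
        (hK.subset (Finset.coe_subset.2 (hPsub.trans Finset.inter_subset_left))) hPcard hA
    set S := Finset.univ \ K with hS
    have hScard : S.card = n - k := by rw [hS, Finset.card_univ_diff, hcard]
    set G' := G.induce (S : Set V) with hG'
    have hG'cf : G'.CliqueFree r := hG.comap ⟨(SimpleGraph.Embedding.induce (S : Set V)).toCopy⟩
    set A' : Finset (S : Set V) := Finset.univ.filter (fun w => (w : V) ∈ A) with hA'
    have hA'card : A'.card = (A \ K).card := by
      refine Finset.card_bij (fun (w : (S : Set V)) (_ : w ∈ A') => (w : V)) ?_ ?_ ?_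
      · intro w hw
        simp only [hA', Finset.mem_filter, Finset.mem_univ, true_and] at hw
        have hwS : (w : V) ∈ Finset.univ \ K := by
          rw [← hS]; exact Finset.mem_coe.1 w.2
        exact Finset.mem_sdiff.2 ⟨hw, (Finset.mem_sdiff.1 hwS).2⟩
      · intro a _ b _ hab
        exact Subtype.ext hab
      · intro v hv
        rw [Finset.mem_sdiff] at hv
        have hvS : v ∈ (S : Set V) := by
          rw [Finset.mem_coe, hS, Finset.mem_sdiff]
          exact ⟨Finset.mem_univ v, hv.2⟩
        exact ⟨⟨v, hvS⟩, by simp [hA', hv.1], rfl⟩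
    have hAcard_split : A.card = p + A'.card := by
      have h1 := Finset.card_inter_add_card_sdiff A K
      have h2 : #(A ∩ K) = p := by rw [hp, Finset.inter_comm]
      rw [hA'card]
      omega
    have hA'cf : (G'.induce (A' : Set (S : Set V))).CliqueFree t := by
      refine hA.comap ⟨SimpleGraph.Embedding.toCopy ?_⟩
      refine ⟨⟨fun z => ⟨((z : (S : Set V)) : V), ?_⟩, ?_⟩, ?_⟩
      · have hz := z.2
        simp only [Finset.mem_coe, hA', Finset.mem_filter, Finset.mem_univ, true_and] at hz
        exact hz
      · intro a b hab
        apply Subtype.ext; apply Subtype.ext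
        have h' := congrArg Subtype.val hab
        exact h'
      · exact Iff.rfl
    have hWcard : Fintype.card (S : Set V) = n - k := by
      have h1 : Fintype.card (S : Set V) = S.card := Fintype.card_coe S
      rw [h1, hScard]
    obtain ⟨x', y', hsumxy, haA', hedge'⟩ :=
      IH (n - k) (by omega) (S : Set V) G' A' hWcard hG'cf hA'cf
    -- edge counting
    set dK : V → ℕ := fun v => #(K.filter (G.Adj v)) with hdK
    set dS : V → ℕ := fun v => #(S.filter (G.Adj v)) with hdS
    have hun : K ∪ S = Finset.univ := by
      rw [hS]; exact Finset.union_sdiff_of_subset (Finset.subset_univ K)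
    have hdisj : Disjoint K S := by
      rw [hS]; exact Finset.disjoint_sdiff
    have hdeg : ∀ v : V, G.degree v = dK v + dS v := by
      intro v
      rw [← SimpleGraph.card_neighborFinset_eq_degree, SimpleGraph.neighborFinset_eq_filter]
      rw [← hun, Finset.filter_union, Finset.card_union_of_disjoint
        (Finset.disjoint_filter_filter hdisj)]
    have houtK : ∀ v ∈ S, dK v ≤ k - 1 := by
      intro v hvS
      have hvK : v ∉ K := by
        have h := hvS
        rw [hS] at h
        exact (Finset.mem_sdiff.1 h).2
      have hex : ∃ w ∈ K, ¬ G.Adj v w := by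
        by_contra hc
        push_neg at hc
        have hclique : G.IsClique ((insert v K : Finset V) : Set V) := by
          rw [Finset.coe_insert]
          exact hK.insert (fun b hb _ => hc b (Finset.mem_coe.1 hb))
        have hmem' : insert v K ∈ CL :=
          Finset.mem_filter.2 ⟨Finset.mem_powerset.2 (Finset.subset_univ _), hclique⟩
        have hle := hKmax _ hmem'
        rw [Finset.card_insert_of_notMem hvK] at hle
        omega
      obtain ⟨w, hwK, hnadj⟩ := hex
      have hsub : K.filter (G.Adj v) ⊆ K.erase w := by
        intro z hz
        rw [Finset.mem_filter] at hz
        exact Finset.mem_erase.2 ⟨fun hzw => hnadj (hzw ▸ hz.2), hz.1⟩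
      calc dK v ≤ (K.erase w).card := Finset.card_le_card hsub
      _ = k - 1 := by rw [Finset.card_erase_of_mem hwK]
    have hinK : ∀ v ∈ K, dK v ≤ k - 1 := by
      intro v hvK
      have hsub : K.filter (G.Adj v) ⊆ K.erase v := by
        intro z hz
        rw [Finset.mem_filter] at hz
        exact Finset.mem_erase.2 ⟨fun hzv => G.irrefl (hzv ▸ hz.2), hz.1⟩
      calc dK v ≤ (K.erase v).card := Finset.card_le_card hsub
      _ = k - 1 := by rw [Finset.card_erase_of_mem hvK]
    have hswap : ∑ v ∈ K, dS v = ∑ w ∈ S, dK w := by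
      simp only [hdS, hdK, Finset.card_filter]
      rw [Finset.sum_comm]
      apply Finset.sum_congr rfl
      intro w _
      apply Finset.sum_congr rfl
      intro v _
      simp only [G.adj_comm]
    have hb : ∀ w : (S : Set V), G'.degree w = dS (w : V) := by
      intro w
      have hbb : G'.degree w = dS (w : V) := by
        rw [← SimpleGraph.card_neighborFinset_eq_degree, SimpleGraph.neighborFinset_eq_filter, hdS]
        refine Finset.card_bij (fun (z : (S : Set V)) (_ : z ∈ Finset.univ.filter (G'.Adj w)) => (z : V)) ?_ ?_ ?_
        · intro z hz
          rw [Finset.mem_filter] at hz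
          exact Finset.mem_filter.2 ⟨Finset.mem_coe.1 z.2, hz.2⟩
        · intro a _ b _ hab
          exact Subtype.ext hab
        · intro v hv
          rw [Finset.mem_filter] at hv
          exact ⟨⟨v, Finset.mem_coe.2 hv.1⟩, Finset.mem_filter.2 ⟨Finset.mem_univ _, hv.2⟩, rfl⟩
      exact hbb
    have hG'sum : ∑ v ∈ S, dS v = 2 * G'.edgeFinset.card := by
      rw [← G'.sum_degrees_eq_twice_card_edges, ← Finset.sum_finset_coe dS S]
      exact (Finset.sum_congr rfl (fun w _ => (hb w).symm))
    have hdegsum : ∑ v : V, G.degree v = 2 * G.edgeFinset.card :=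
      G.sum_degrees_eq_twice_card_edges
    have hUsplit : ∑ v ∈ S, G.degree v + ∑ v ∈ K, G.degree v = ∑ v : V, G.degree v :=
      Finset.sum_sdiff (Finset.subset_univ K)
    have hSdK : ∑ v ∈ S, dK v ≤ (n - k) * (k - 1) := by
      calc ∑ v ∈ S, dK v ≤ ∑ _v ∈ S, (k - 1) := Finset.sum_le_sum houtK
      _ = (n - k) * (k - 1) := by rw [Finset.sum_const, hScard, smul_eq_mul]
    have hKdK : ∑ v ∈ K, dK v ≤ k * (k - 1) := by
      calc ∑ v ∈ K, dK v ≤ ∑ _v ∈ K, (k - 1) := Finset.sum_le_sum hinK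
      _ = k * (k - 1) := by rw [Finset.sum_const, smul_eq_mul]
    have hSdeg : ∑ v ∈ S, G.degree v = ∑ v ∈ S, dK v + 2 * G'.edgeFinset.card := by
      rw [← hG'sum, ← Finset.sum_add_distrib]
      exact Finset.sum_congr rfl (fun v _ => hdeg v)
    have hKdeg : ∑ v ∈ K, G.degree v = ∑ v ∈ K, dK v + ∑ w ∈ S, dK w := by
      rw [← hswap, ← Finset.sum_add_distrib]
      exact Finset.sum_congr rfl (fun v _ => hdeg v)
    have hEDGE : 2 * G.edgeFinset.card ≤ 2 * G'.edgeFinset.card + k * (k-1) + 2 * ((n-k) * (k-1)) := by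
      omega
    -- construct x, y
    obtain ⟨cx, hcxe⟩ : ∃ c, c = min (t-1) k := ⟨_, rfl⟩
    obtain ⟨cy, hcye⟩ : ∃ c, c = k - cx := ⟨_, rfl⟩
    have hcxk : cx ≤ k := by omega
    have hcxt : cx ≤ t - 1 := by omega
    have hpcx : p ≤ cx := by omega
    have hcyrt : cy ≤ r - t := by omega
    have hcxcy : cx + cy = k := by omega
    refine ⟨fun i => x' i + (if (i : ℕ) < cx then 1 else 0),
            fun j => y' j + (if (j : ℕ) < cy then 1 else 0), ?_, ?_, ?_⟩
    · rw [Finset.sum_add_distrib, Finset.sum_add_distrib,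
        sum_ind_fin _ _ hcxt, sum_ind_fin _ _ hcyrt]
      omega
    · rw [Finset.sum_add_distrib, sum_ind_fin _ _ hcxt]
      omega
    · have hx2 : ∑ i, (x' i + (if (i : ℕ) < cx then 1 else 0))^2
          ≤ ∑ i, (x' i)^2 + 2 * (∑ i, x' i) + cx := by
        have hpt2 : ∀ i : Fin (t-1), (x' i + (if (i : ℕ) < cx then 1 else 0))^2
            ≤ (x' i)^2 + 2 * (x' i) + (if (i : ℕ) < cx then 1 else 0) :=
          fun i => pt_sq _ _ (by split <;> omega)
        calc ∑ i, (x' i + (if (i : ℕ) < cx then 1 else 0))^2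
            ≤ ∑ i, ((x' i)^2 + 2 * (x' i) + (if (i : ℕ) < cx then 1 else 0)) :=
              Finset.sum_le_sum (fun i _ => hpt2 i)
        _ = ∑ i, (x' i)^2 + 2 * (∑ i, x' i) + cx := by
              rw [Finset.sum_add_distrib, Finset.sum_add_distrib, sum_ind_fin _ _ hcxt,
                Finset.mul_sum]
      have hy2 : ∑ j, (y' j + (if (j : ℕ) < cy then 1 else 0))^2
          ≤ ∑ j, (y' j)^2 + 2 * (∑ j, y' j) + cy := by
        have hpt2 : ∀ j : Fin (r-t), (y' j + (if (j : ℕ) < cy then 1 else 0))^2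
            ≤ (y' j)^2 + 2 * (y' j) + (if (j : ℕ) < cy then 1 else 0) :=
          fun j => pt_sq _ _ (by split <;> omega)
        calc ∑ j, (y' j + (if (j : ℕ) < cy then 1 else 0))^2
            ≤ ∑ j, ((y' j)^2 + 2 * (y' j) + (if (j : ℕ) < cy then 1 else 0)) :=
              Finset.sum_le_sum (fun j _ => hpt2 j)
        _ = ∑ j, (y' j)^2 + 2 * (∑ j, y' j) + cy := by
              rw [Finset.sum_add_distrib, Finset.sum_add_distrib, sum_ind_fin _ _ hcyrt,
                Finset.mul_sum]
      have hnG : G.edgeSet.ncard = G.edgeFinset.card := ncard_edgeSet G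
      have hnG' : G'.edgeSet.ncard = G'.edgeFinset.card := ncard_edgeSet G'
      rw [hnG]
      rw [hnG'] at hedge'
      obtain ⟨m, hm⟩ : ∃ m, n = m + k := ⟨n - k, by omega⟩
      obtain ⟨k', hk'⟩ : ∃ k', k = k' + 1 := ⟨k - 1, by omega⟩
      have hmn : n - k = m := by omega
      rw [hmn] at hedge'
      have hEDGE' : 2 * G.edgeFinset.card
          ≤ 2 * G'.edgeFinset.card + (k'+1)*k' + 2*(m*k') := by
        have e1 : k * (k-1) = (k'+1)*k' := by rw [hk', Nat.add_sub_cancel]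
        have e2 : (n-k)*(k-1) = m*k' := by rw [hmn, hk', Nat.add_sub_cancel]
        rw [e1, e2] at hEDGE
        exact hEDGE
      have hn' : n = m + k' + 1 := by omega
      rw [hn']
      exact wrap _ G'.edgeFinset.card _ _ _ _ (∑ i, x' i) (∑ j, y' j) m k' cx cy
        hedge' hEDGE' hx2 hy2 (by omega) (by omega)


end Stmt8

open SimpleGraph

theorem stmt_8 {V : Type*} [Fintype V] [DecidableEq V] (r t : ℕ) (ht : 2 ≤ t) (htr : t ≤ r - 1)
    (G : SimpleGraph V) (hG : G.CliqueFree r)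
    (A : Finset V)
    (hA : (G.induce (A : Set V)).CliqueFree t)
    (ha : ((t : ℝ) - 1) * (Fintype.card V : ℝ) / ((r : ℝ) - 1) ≤ (A.card : ℝ)) :
    G.edgeSet.ncard ≤ (turanGraph A.card (t - 1)).edgeSet.ncard
      + (turanGraph (Fintype.card V - A.card) (r - t)).edgeSet.ncard
      + A.card * (Fintype.card V - A.card) := by
  classical
  have hr3 : 3 ≤ r := by omega
  have hub : A.card ≤ Fintype.card V := by
    rw [← Finset.card_univ]; exact Finset.card_le_univ A
  have hra : (t-1) * Fintype.card V ≤ (r-1) * A.card := by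
    have hrpos : (0:ℝ) < (r:ℝ) - 1 := by
      have h3 : (3:ℝ) ≤ (r:ℝ) := by exact_mod_cast hr3
      linarith
    rw [div_le_iff₀ hrpos] at ha
    have h3 : ((t-1 : ℕ) : ℝ) * ((Fintype.card V : ℕ) : ℝ) ≤ ((r-1 : ℕ):ℝ) * ((A.card : ℕ) : ℝ) := by
      push_cast [Nat.cast_sub (by omega : 1 ≤ t), Nat.cast_sub (by omega : 1 ≤ r)]
      linarith
    exact_mod_cast h3
  obtain ⟨x, y, hsum, hax, hedge⟩ := Stmt8.lemA r t ht htr (Fintype.card V) V G A rfl hG hA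
  obtain ⟨sx, hsx⟩ : ∃ s, s = ∑ i, x i := ⟨_, rfl⟩
  have hs2 : sx ≤ Fintype.card V := by omega
  obtain ⟨b1, hb1⟩ : ∃ b, Fintype.card V = sx + b := ⟨Fintype.card V - sx, by omega⟩
  have hy : ∑ j, y j = b1 := by omega
  have hsq1 := Stmt8.SQ_le_sum_sq sx (t-1) x hsx.symm
  have hsq2 := Stmt8.SQ_le_sum_sq b1 (r-t) y hy
  have h2e1 := Stmt8.two_eT sx (t-1) (by omega)
  have h2e2 := Stmt8.two_eT b1 (r-t) (by omega)
  have hnsq : (sx + b1)^2 = sx^2 + 2*(sx*b1) + b1^2 := by ring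
  have hedge2 : 2 * G.edgeSet.ncard + (∑ i, (x i)^2) + (∑ j, (y j)^2) ≤ (sx + b1)^2 := by
    rw [← hb1]; exact hedge
  have hmain : G.edgeSet.ncard ≤ Stmt8.eT sx (t-1) + Stmt8.eT b1 (r-t) + sx*b1 := by
    omega
  have hchain := Stmt8.chain t r (Fintype.card V) A.card ht htr hra sx (hsx ▸ hax) hs2
  have hnb : Fintype.card V - sx = b1 := by omega
  rw [hnb] at hchain
  have hT1 : (turanGraph A.card (t - 1)).edgeSet.ncard = Stmt8.eT A.card (t-1) :=
    Stmt8.ncard_edgeSet _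
  have hT2 : (turanGraph (Fintype.card V - A.card) (r - t)).edgeSet.ncard
      = Stmt8.eT (Fintype.card V - A.card) (r-t) := Stmt8.ncard_edgeSet _
  rw [hT1, hT2]
  have hfinal := le_trans hmain hchain
  omega
end

section
/- Let r ≥ 4 be an integer and let G be a K_r-free graph on n vertices whose vertex set is partitioned as V(G) = X ∪ Y ∪ Z. Suppose that the induced subgraph G[Y] is K_{r-2}-free, the induced subgraph G[X ∪ Y] is K_{r-1}-free, and |Y|/(r-3) ≥ |X| ≥ |Z|. Then e(G) ≤ (r-4)/(2(r-3))·|Y|² + |X||Y| + |Y||Z| + |Z||X|. -/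
open SimpleGraph Finset

namespace Stmt9Aux


variable {V : Type*}

/-- ordered pair count of adjacent pairs inside `U` -/
def pc (G : SimpleGraph V) [DecidableRel G.Adj] (U : Finset V) : ℕ :=
  ∑ u ∈ U, ∑ v ∈ U, if G.Adj u v then 1 else 0

lemma row_bound (G : SimpleGraph V) [DecidableRel G.Adj] [DecidableEq V] (K : Finset V) (u w : V)
    (hw : w ∈ K) (hnadj : ¬ G.Adj u w) :
    (∑ v ∈ K, if G.Adj u v then 1 else 0) ≤ K.card - 1 := by
  rw [Finset.sum_boole, Nat.cast_id]
  calc (K.filter (fun v => G.Adj u v)).card ≤ (K.erase w).card := by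
        apply Finset.card_le_card
        intro v hv
        rw [Finset.mem_filter] at hv
        rw [Finset.mem_erase]
        exact ⟨fun hvw => hnadj (hvw ▸ hv.2), hv.1⟩
    _ = K.card - 1 := Finset.card_erase_of_mem hw

lemma pc_split (G : SimpleGraph V) [DecidableRel G.Adj] [DecidableEq V] {K U : Finset V}
    (hKU : K ⊆ U) :
    pc G U = pc G (U \ K) + 2 * (∑ u ∈ U \ K, ∑ v ∈ K, if G.Adj u v then 1 else 0)
      + pc G K := by
  have hswap : (∑ u ∈ K, ∑ v ∈ U \ K, if G.Adj u v then 1 else 0)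
      = ∑ u ∈ U \ K, ∑ v ∈ K, if G.Adj u v then 1 else 0 := by
    rw [Finset.sum_comm]
    apply Finset.sum_congr rfl
    intro u _
    apply Finset.sum_congr rfl
    intro v _
    simp only [G.adj_comm]
  have h1 : ∀ W : Finset V, (∑ u ∈ W, ∑ v ∈ U, if G.Adj u v then 1 else 0)
      = (∑ u ∈ W, ∑ v ∈ U \ K, if G.Adj u v then 1 else 0)
        + ∑ u ∈ W, ∑ v ∈ K, if G.Adj u v then 1 else 0 := by
    intro W
    rw [← Finset.sum_add_distrib]
    apply Finset.sum_congr rfl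
    intro u _
    rw [Finset.sum_sdiff hKU]
  unfold pc
  rw [← Finset.sum_sdiff (f := fun u => ∑ v ∈ U, if G.Adj u v then 1 else 0) hKU,
    h1 (U \ K), h1 K, hswap]
  ring

lemma pc_le (G : SimpleGraph V) [DecidableRel G.Adj] [DecidableEq V] {K U : Finset V}
    (hKU : K ⊆ U) (hmax : ∀ v ∈ U, v ∉ K → ∃ w ∈ K, ¬ G.Adj v w) :
    pc G U ≤ pc G (U \ K) + 2 * ((U \ K).card * (K.card - 1)) + K.card * (K.card - 1) := by
  rw [pc_split G hKU]
  have hcross : (∑ u ∈ U \ K, ∑ v ∈ K, if G.Adj u v then 1 else 0)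
      ≤ (U \ K).card * (K.card - 1) := by
    rw [← smul_eq_mul, ← Finset.sum_const]
    apply Finset.sum_le_sum
    intro u hu
    rw [Finset.mem_sdiff] at hu
    obtain ⟨w, hw, hnadj⟩ := hmax u hu.1 hu.2
    exact row_bound G K u w hw hnadj
  have hin : pc G K ≤ K.card * (K.card - 1) := by
    unfold pc
    rw [← smul_eq_mul, ← Finset.sum_const]
    apply Finset.sum_le_sum
    intro u hu
    exact row_bound G K u u hu (G.loopless.irrefl u)
  omega

lemma clique_card_lt_of_induce {S : Set V} {q : ℕ} (G : SimpleGraph V)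
    (hfree : (G.induce S).CliqueFree q) (T : Finset V) (hTS : ↑T ⊆ S)
    (hclique : (T : Set V).Pairwise G.Adj) : T.card < q := by
  classical
  by_contra h
  push_neg at h
  obtain ⟨T', hT'sub, hT'card⟩ := Finset.exists_subset_card_eq h
  have hT'S : ∀ x ∈ T', x ∈ S := fun x hx => hTS (hT'sub hx)
  let f : {x // x ∈ T'} ↪ S := ⟨fun x => ⟨x.1, hT'S x.1 x.2⟩, by
    intro a b hab
    exact Subtype.ext (by simpa [Subtype.mk.injEq] using hab)⟩
  apply hfree (T'.attach.map f)
  constructor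
  · intro a ha b hb hab
    simp only [Finset.coe_map, Set.mem_image, Finset.mem_coe, Finset.mem_attach] at ha hb
    obtain ⟨a', -, rfl⟩ := ha
    obtain ⟨b', -, rfl⟩ := hb
    have hne : a'.1 ≠ b'.1 := by
      intro hh
      exact hab (Subtype.ext hh)
    exact hclique (hT'sub a'.2) (hT'sub b'.2) hne
  · rw [Finset.card_map, Finset.card_attach, hT'card]

lemma clique_card_lt_global {q : ℕ} (G : SimpleGraph V)
    (hfree : G.CliqueFree q) (T : Finset V)
    (hclique : (T : Set V).Pairwise G.Adj) : T.card < q := by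
  classical
  by_contra h
  push_neg at h
  obtain ⟨T', hT'sub, hT'card⟩ := Finset.exists_subset_card_eq h
  exact hfree T' ⟨hclique.mono (by exact_mod_cast hT'sub), hT'card⟩

lemma exists_max_clique (G : SimpleGraph V) [DecidableRel G.Adj] [DecidableEq V]
    (U : Finset V) (hU : U.Nonempty) :
    ∃ K : Finset V, K ⊆ U ∧ K.Nonempty ∧ (K : Set V).Pairwise G.Adj ∧
      ∀ v ∈ U, v ∉ K → ∃ w ∈ K, ¬ G.Adj v w := by
  classical
  obtain ⟨u0, hu0⟩ := hU
  set 𝒮 := U.powerset.filter (fun K : Finset V => K.Nonempty ∧ (K : Set V).Pairwise G.Adj) with h𝒮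
  have hne : 𝒮.Nonempty := by
    refine ⟨{u0}, ?_⟩
    rw [h𝒮, Finset.mem_filter, Finset.mem_powerset]
    refine ⟨Finset.singleton_subset_iff.2 hu0, Finset.singleton_nonempty u0, ?_⟩
    simp
  obtain ⟨K, hK, hKmax⟩ := Finset.exists_max_image 𝒮 Finset.card hne
  rw [h𝒮, Finset.mem_filter, Finset.mem_powerset] at hK
  refine ⟨K, hK.1, hK.2.1, hK.2.2, ?_⟩
  intro v hv hvK
  by_contra hcon
  push_neg at hcon
  have hins : insert v K ∈ 𝒮 := by
    rw [h𝒮, Finset.mem_filter, Finset.mem_powerset]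
    refine ⟨Finset.insert_subset hv hK.1, Finset.insert_nonempty _ _, ?_⟩
    haveI : Std.Symm G.Adj := ⟨fun _ _ h => h.symm⟩
    rw [Finset.coe_insert, Set.pairwise_insert_of_symmetric]
    exact ⟨hK.2.2, fun w hw _ => hcon w hw⟩
  have := hKmax _ hins
  rw [Finset.card_insert_of_notMem hvK] at this
  omega



lemma assemble (r : ℕ) (s' : ℕ → ℝ) (D : Finset ℕ)
    (k b c N' N mU' mU pU' pU PU PU' : ℕ)
    (h1 : ∀ i, 0 ≤ s' i)
    (h2 : (∑ i ∈ range (r-1), s' i) = (N' : ℝ))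
    (h3 : s' (r-2) ≤ (pU' : ℝ))
    (h4 : s' (r-3) + s' (r-2) ≤ (mU' : ℝ) + (pU' : ℝ))
    (h5 : (PU' : ℝ) ≤ (N' : ℝ)^2 - ∑ i ∈ range (r-1), (s' i)^2)
    (hPC : PU ≤ PU' + 2 * (N' * (k-1)) + k*(k-1))
    (hk1 : 1 ≤ k)
    (hpc : pU = pU' + c) (hmc : mU = mU' + b) (hNc : N = N' + k)
    (F1 : D ⊆ range (r-1)) (F2 : D.card = k)
    (F3 : (r-2) ∈ D → 1 ≤ c)
    (F4 : ((if (r-3) ∈ D then 1 else 0) + (if (r-2) ∈ D then 1 else 0) : ℕ) ≤ b + c) :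
    ∃ s : ℕ → ℝ, (∀ i, 0 ≤ s i) ∧ (∑ i ∈ range (r-1), s i) = (N : ℝ) ∧
      s (r-2) ≤ (pU : ℝ) ∧ s (r-3) + s (r-2) ≤ (mU : ℝ) + (pU : ℝ) ∧
      (PU : ℝ) ≤ (N : ℝ)^2 - ∑ i ∈ range (r-1), (s i)^2 := by
  classical
  set χ : ℕ → ℝ := fun i => if i ∈ D then 1 else 0 with hχ
  have hχ0 : ∀ i, 0 ≤ χ i := by intro i; rw [hχ]; dsimp; split <;> norm_num
  have hχ1 : ∀ i, χ i ≤ 1 := by intro i; rw [hχ]; dsimp; split <;> norm_num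
  have hχsq : ∀ i, (χ i)^2 = χ i := by intro i; rw [hχ]; dsimp; split <;> norm_num
  have hχsum : (∑ i ∈ range (r-1), χ i) = (k : ℝ) := by
    rw [hχ]; dsimp
    rw [Finset.sum_boole, Finset.filter_mem_eq_inter, Finset.inter_eq_right.mpr F1, F2]
  have hsχ : (∑ i ∈ range (r-1), s' i * χ i) ≤ (N' : ℝ) := by
    rw [← h2]
    apply Finset.sum_le_sum
    intro i _
    calc s' i * χ i ≤ s' i * 1 := by
          apply mul_le_mul_of_nonneg_left (hχ1 i) (h1 i)
      _ = s' i := mul_one _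
  refine ⟨fun i => s' i + χ i, ?_, ?_, ?_, ?_, ?_⟩
  · intro i; exact add_nonneg (h1 i) (hχ0 i)
  · rw [Finset.sum_add_distrib, h2, hχsum, hNc]; push_cast; ring
  · dsimp only
    by_cases hmem : (r-2) ∈ D
    · have hc1 := F3 hmem
      have : χ (r-2) = 1 := by rw [hχ]; dsimp; rw [if_pos hmem]
      rw [this, hpc]
      have : (1:ℝ) ≤ (c:ℝ) := by exact_mod_cast hc1
      push_cast
      linarith
    · have : χ (r-2) = 0 := by rw [hχ]; dsimp; rw [if_neg hmem]
      rw [this, hpc]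
      push_cast
      linarith
  · have hcast : ((if (r-3) ∈ D then (1:ℕ) else 0) : ℝ) + ((if (r-2) ∈ D then (1:ℕ) else 0) : ℝ)
        = χ (r-3) + χ (r-2) := by
      rw [hχ]; dsimp; split <;> split <;> norm_num
    have hF4 : χ (r-3) + χ (r-2) ≤ (b : ℝ) + (c : ℝ) := by
      rw [← hcast]
      have : (((if (r-3) ∈ D then (1:ℕ) else 0) + (if (r-2) ∈ D then 1 else 0) : ℕ) : ℝ)
          ≤ ((b + c : ℕ) : ℝ) := by exact_mod_cast F4
      push_cast at this
      linarith
    dsimp only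
    rw [hmc, hpc]
    push_cast
    linarith
  · dsimp only
    have hexp : ∑ i ∈ range (r-1), (s' i + χ i)^2
        = (∑ i ∈ range (r-1), (s' i)^2) + 2 * (∑ i ∈ range (r-1), s' i * χ i)
          + (k : ℝ) := by
      rw [← hχsum, Finset.mul_sum, ← Finset.sum_add_distrib, ← Finset.sum_add_distrib]
      apply Finset.sum_congr rfl
      intro i _
      rw [add_sq, hχsq i]
      ring
    rw [hexp]
    have hPCr : (PU : ℝ) ≤ (PU' : ℝ) + 2 * ((N':ℝ) * ((k:ℝ)-1)) + (k:ℝ)*((k:ℝ)-1) := by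
      have h := (Nat.cast_le (α := ℝ)).mpr hPC
      push_cast [Nat.cast_sub hk1] at h
      linarith
    have hNr : (N : ℝ) = (N' : ℝ) + (k : ℝ) := by rw [hNc]; push_cast; ring
    nlinarith [hsχ, h5, hPCr]
  
section
lemma scalar_ineq (t n m p u v A : ℝ) (ht : 1 ≤ t) (hu : 0 ≤ u) (hv : 0 ≤ v)
    (hvp : v ≤ p) (huv : u + v ≤ m + p) (htm : t*m ≤ n) (hpm : p ≤ m)
    (hA : A = n + m + p - u - v) :
    n^2 + t*m^2 + t*p^2 ≤ A^2 + t*u^2 + t*v^2 := by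
  subst hA
  have ht0 : (0:ℝ) ≤ t := by linarith
  nlinarith [sq_nonneg (u+v-m-p), mul_nonneg ht0 (sq_nonneg (u-m)),
    mul_nonneg ht0 (sq_nonneg (v-p)),
    mul_nonneg (by linarith : (0:ℝ) ≤ n - t*m) (by linarith : (0:ℝ) ≤ m + p - u - v),
    mul_nonneg ht0 (mul_nonneg (by linarith : (0:ℝ) ≤ m - p) (by linarith : (0:ℝ) ≤ p - v))]

end

section
variable {V : Type*}

lemma main_aux [DecidableEq V] (r : ℕ) (hr : 4 ≤ r) (G : SimpleGraph V) [DecidableRel G.Adj]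
    (X Y Z : Set V)
    [DecidablePred (· ∈ X)] [DecidablePred (· ∈ Y)] [DecidablePred (· ∈ Z)]
    (hG : G.CliqueFree r)
    (hYfree : (G.induce Y).CliqueFree (r - 2))
    (hXYfree : (G.induce (X ∪ Y)).CliqueFree (r - 1))
    (hXY : Disjoint X Y) (hXZ : Disjoint X Z) (hYZ : Disjoint Y Z)
    (hcover : X ∪ Y ∪ Z = Set.univ)
    (U : Finset V) :
    ∃ s : ℕ → ℝ, (∀ i, 0 ≤ s i) ∧ (∑ i ∈ range (r-1), s i) = (U.card : ℝ) ∧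
      s (r-2) ≤ ((U.filter (· ∈ Z)).card : ℝ) ∧
      s (r-3) + s (r-2) ≤ ((U.filter (· ∈ X)).card : ℝ) + ((U.filter (· ∈ Z)).card : ℝ) ∧
      (pc G U : ℝ) ≤ (U.card : ℝ)^2 - ∑ i ∈ range (r-1), (s i)^2 := by
  induction U using Finset.strongInductionOn with
  | _ U IH =>
  rcases U.eq_empty_or_nonempty with rfl | hUne
  · exact ⟨fun _ => 0, fun i => le_refl 0, by simp, by simp, by simp, by simp [pc]⟩
  obtain ⟨K, hKU, hKne, hKclique, hKmax⟩ := exists_max_clique G U hUne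
  set U' := U \ K with hU'
  obtain ⟨s', h1, h2, h3, h4, h5⟩ := IH U' (Finset.sdiff_ssubset hKU hKne)
  set a := (K.filter (· ∈ Y)).card with ha_def
  set b := (K.filter (· ∈ X)).card with hb_def
  set c := (K.filter (· ∈ Z)).card with hc_def
  set k := K.card with hk_def
  -- partition counting
  have hsplit : ∀ W : Finset V,
      W.card = (W.filter (· ∈ X)).card + (W.filter (· ∈ Y)).card + (W.filter (· ∈ Z)).card := by
    intro W
    have e1 : W.filter (· ∈ X ∪ Y) = W.filter (· ∈ X) ∪ W.filter (· ∈ Y) := by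
      ext x
      simp only [Finset.mem_filter, Finset.mem_union, Set.mem_union]
      tauto
    have e2 : W.filter (· ∈ X ∪ Y ∪ Z) = W.filter (· ∈ X ∪ Y) ∪ W.filter (· ∈ Z) := by
      ext x
      simp only [Finset.mem_filter, Finset.mem_union, Set.mem_union]
      tauto
    have e0 : W.filter (· ∈ X ∪ Y ∪ Z) = W := by
      apply Finset.filter_true_of_mem
      intro x _
      rw [hcover]
      trivial
    have d1 : Disjoint (W.filter (· ∈ X)) (W.filter (· ∈ Y)) := by
      rw [Finset.disjoint_left]
      intro x hx hy
      rw [Finset.mem_filter] at hx hy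
      exact Set.disjoint_left.mp hXY hx.2 hy.2
    have d2 : Disjoint (W.filter (· ∈ X ∪ Y)) (W.filter (· ∈ Z)) := by
      rw [Finset.disjoint_left]
      intro x hx hz
      rw [Finset.mem_filter] at hx hz
      rcases hx.2 with h | h
      · exact Set.disjoint_left.mp hXZ h hz.2
      · exact Set.disjoint_left.mp hYZ h hz.2
    calc W.card = (W.filter (· ∈ X ∪ Y ∪ Z)).card := by rw [e0]
      _ = (W.filter (· ∈ X ∪ Y)).card + (W.filter (· ∈ Z)).card := by
          rw [e2, Finset.card_union_of_disjoint d2]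
      _ = _ := by rw [e1, Finset.card_union_of_disjoint d1]
  have hcount : ∀ (P : V → Prop) [DecidablePred P],
      (U.filter P).card = (U'.filter P).card + (K.filter P).card := by
    intro P _
    have hUeq : U.filter P = (U'.filter P) ∪ (K.filter P) := by
      rw [hU', ← Finset.filter_union, Finset.sdiff_union_of_subset hKU]
    rw [hUeq, Finset.card_union_of_disjoint
      (Finset.disjoint_filter_filter Finset.sdiff_disjoint)]
  have hNc : U.card = U'.card + k := by
    rw [hU', hk_def, Finset.card_sdiff_add_card_eq_card hKU]
  -- clique size bounds
  have hk1 : 1 ≤ k := Finset.card_pos.mpr hKne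
  have hkr : k ≤ r - 1 := by
    have := clique_card_lt_global G hG K hKclique
    omega
  have habk : k = b + a + c := hsplit K
  have hXYcard : (K.filter (· ∈ X ∪ Y)).card = b + a := by
    have e1 : K.filter (· ∈ X ∪ Y) = K.filter (· ∈ X) ∪ K.filter (· ∈ Y) := by
      ext x
      simp only [Finset.mem_filter, Finset.mem_union, Set.mem_union]
      tauto
    have d1 : Disjoint (K.filter (· ∈ X)) (K.filter (· ∈ Y)) := by
      rw [Finset.disjoint_left]
      intro x hx hy
      rw [Finset.mem_filter] at hx hy
      exact Set.disjoint_left.mp hXY hx.2 hy.2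
    rw [e1, Finset.card_union_of_disjoint d1]
  have hab : b + a ≤ r - 2 := by
    have hlt := clique_card_lt_of_induce G hXYfree (K.filter (· ∈ X ∪ Y))
      (by intro x hx; rw [Finset.mem_coe, Finset.mem_filter] at hx; exact hx.2)
      (hKclique.mono (by exact_mod_cast Finset.filter_subset _ K))
    omega
  have ha : a ≤ r - 3 := by
    have hlt := clique_card_lt_of_induce G hYfree (K.filter (· ∈ Y))
      (by intro x hx; rw [Finset.mem_coe, Finset.mem_filter] at hx; exact hx.2)
      (hKclique.mono (by exact_mod_cast Finset.filter_subset _ K))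
    omega
  have hPC := pc_le G hKU hKmax
  rw [← hU', ← hk_def] at hPC
  have hpcZ : (U.filter (· ∈ Z)).card = (U'.filter (· ∈ Z)).card + c := hcount _
  have hmcX : (U.filter (· ∈ X)).card = (U'.filter (· ∈ X)).card + b := hcount _
  clear_value a b c k U'
  -- choose D by cases
  by_cases hc0 : c = 0
  · by_cases hb0 : b = 0
    · -- D = range k
      have hD3 : (r-3) ∉ range k := by simp only [Finset.mem_range]; omega
      have hD2 : (r-2) ∉ range k := by simp only [Finset.mem_range]; omega
      exact assemble r s' (range k) k b c U'.card U.card _ _ _ _ _ _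
        h1 h2 h3 h4 h5 hPC hk1 hpcZ hmcX hNc
        (Finset.range_subset_range.mpr (by omega)) (Finset.card_range k)
        (fun h => absurd h hD2)
        (by rw [if_neg hD3, if_neg hD2]; omega)
    · -- D = range (k-1) ∪ {r-3}
      have hnm : (r-3) ∉ range (k-1) := by simp only [Finset.mem_range]; omega
      have hD2 : (r-2) ∉ range (k-1) ∪ {r-3} := by
        simp only [Finset.mem_union, Finset.mem_range, Finset.mem_singleton]; omega
      have hD3 : (r-3) ∈ range (k-1) ∪ {r-3} :=
        Finset.mem_union_right _ (Finset.mem_singleton_self _)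
      exact assemble r s' (range (k-1) ∪ {r-3}) k b c U'.card U.card _ _ _ _ _ _
        h1 h2 h3 h4 h5 hPC hk1 hpcZ hmcX hNc
        (by
          apply Finset.union_subset
          · exact Finset.range_subset_range.mpr (by omega)
          · simp only [Finset.singleton_subset_iff, Finset.mem_range]; omega)
        (by rw [Finset.card_union_of_disjoint (Finset.disjoint_singleton_right.mpr hnm),
              Finset.card_range, Finset.card_singleton]; omega)
        (fun h => absurd h hD2)
        (by rw [if_pos hD3, if_neg hD2]; omega)
  · by_cases hbc2 : 2 ≤ b + c
    · -- D = range (k-2) ∪ {r-3, r-2}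
      have hne32 : (r-3) ≠ (r-2) := by omega
      have hnm : Disjoint (range (k-2)) ({r-3, r-2} : Finset ℕ) := by
        rw [Finset.disjoint_right]
        intro x hx
        simp only [Finset.mem_insert, Finset.mem_singleton] at hx
        simp only [Finset.mem_range]
        omega
      have hD2 : (r-2) ∈ range (k-2) ∪ {r-3, r-2} :=
        Finset.mem_union_right _ (Finset.mem_insert_of_mem (Finset.mem_singleton_self _))
      have hD3 : (r-3) ∈ range (k-2) ∪ {r-3, r-2} :=
        Finset.mem_union_right _ (Finset.mem_insert_self _ _)
      exact assemble r s' (range (k-2) ∪ {r-3, r-2}) k b c U'.card U.card _ _ _ _ _ _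
        h1 h2 h3 h4 h5 hPC hk1 hpcZ hmcX hNc
        (by
          apply Finset.union_subset
          · exact Finset.range_subset_range.mpr (by omega)
          · intro x hx
            simp only [Finset.mem_insert, Finset.mem_singleton] at hx
            simp only [Finset.mem_range]
            omega)
        (by
          rw [Finset.card_union_of_disjoint hnm, Finset.card_range,
            Finset.card_insert_of_notMem (by simp only [Finset.mem_singleton]; omega),
            Finset.card_singleton]
          omega)
        (fun _ => by omega)
        (by rw [if_pos hD3, if_pos hD2]; omega)
    · -- b = 0, c = 1 : D = range (k-1) ∪ {r-2}
      have hb0 : b = 0 := by omega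
      have hc1 : c = 1 := by omega
      have hnm : (r-2) ∉ range (k-1) := by simp only [Finset.mem_range]; omega
      have hD2 : (r-2) ∈ range (k-1) ∪ {r-2} :=
        Finset.mem_union_right _ (Finset.mem_singleton_self _)
      have hD3 : (r-3) ∉ range (k-1) ∪ {r-2} := by
        simp only [Finset.mem_union, Finset.mem_range, Finset.mem_singleton]; omega
      exact assemble r s' (range (k-1) ∪ {r-2}) k b c U'.card U.card _ _ _ _ _ _
        h1 h2 h3 h4 h5 hPC hk1 hpcZ hmcX hNc
        (by
          apply Finset.union_subset
          · exact Finset.range_subset_range.mpr (by omega)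
          · simp only [Finset.singleton_subset_iff, Finset.mem_range]; omega)
        (by rw [Finset.card_union_of_disjoint (Finset.disjoint_singleton_right.mpr hnm),
              Finset.card_range, Finset.card_singleton]; omega)
        (fun _ => by omega)
        (by rw [if_neg hD3, if_pos hD2]; omega)

end

end Stmt9Aux

open Stmt9Aux

theorem stmt_9 {V : Type*} [Fintype V] (r : ℕ) (hr : 4 ≤ r) (G : SimpleGraph V)
    (hG : G.CliqueFree r)
    (X Y Z : Set V) (hXY : Disjoint X Y) (hXZ : Disjoint X Z) (hYZ : Disjoint Y Z)
    (hcover : X ∪ Y ∪ Z = Set.univ)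
    (hYfree : (G.induce Y).CliqueFree (r - 2))
    (hXYfree : (G.induce (X ∪ Y)).CliqueFree (r - 1))
    (h1 : (X.ncard : ℝ) ≤ (Y.ncard : ℝ) / ((r : ℝ) - 3))
    (h2 : Z.ncard ≤ X.ncard) :
    (G.edgeSet.ncard : ℝ) ≤ ((r : ℝ) - 4) / (2 * ((r : ℝ) - 3)) * (Y.ncard : ℝ) ^ 2
      + (X.ncard : ℝ) * (Y.ncard : ℝ) + (Y.ncard : ℝ) * (Z.ncard : ℝ)
      + (Z.ncard : ℝ) * (X.ncard : ℝ) := by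
  classical
  obtain ⟨s, hs0, hssum, hscap1, hscap2, hsPC⟩ :=
    main_aux r hr G X Y Z hG hYfree hXYfree hXY hXZ hYZ hcover Finset.univ
  set t := r - 3 with ht_def
  have ht1 : 1 ≤ t := by omega
  have er1 : r - 1 = t + 2 := by omega
  have er2 : r - 2 = t + 1 := by omega
  have er3 : r - 3 = t := rfl
  rw [er1] at hssum hsPC
  rw [er2] at hscap1 hscap2
  -- counts
  have hYc : Y.ncard = ((univ : Finset V).filter (· ∈ Y)).card := by
    rw [Set.ncard_eq_toFinset_card']
    congr 1
    ext x
    simp [Set.mem_toFinset]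
  have hXc : X.ncard = ((univ : Finset V).filter (· ∈ X)).card := by
    rw [Set.ncard_eq_toFinset_card']
    congr 1
    ext x
    simp [Set.mem_toFinset]
  have hZc : Z.ncard = ((univ : Finset V).filter (· ∈ Z)).card := by
    rw [Set.ncard_eq_toFinset_card']
    congr 1
    ext x
    simp [Set.mem_toFinset]
  -- partition of univ
  have hNsum : (univ : Finset V).card
      = ((univ : Finset V).filter (· ∈ X)).card + ((univ : Finset V).filter (· ∈ Y)).card
        + ((univ : Finset V).filter (· ∈ Z)).card := by
    have e1 : (univ : Finset V).filter (· ∈ X ∪ Y)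
        = (univ : Finset V).filter (· ∈ X) ∪ (univ : Finset V).filter (· ∈ Y) := by
      ext x
      simp only [Finset.mem_filter, Finset.mem_union, Set.mem_union]
      tauto
    have e2 : (univ : Finset V).filter (· ∈ X ∪ Y ∪ Z)
        = (univ : Finset V).filter (· ∈ X ∪ Y) ∪ (univ : Finset V).filter (· ∈ Z) := by
      ext x
      simp only [Finset.mem_filter, Finset.mem_union, Set.mem_union]
      tauto
    have e0 : (univ : Finset V).filter (· ∈ X ∪ Y ∪ Z) = univ := by
      apply Finset.filter_true_of_mem
      intro x _
      rw [hcover]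
      trivial
    have d1 : Disjoint ((univ : Finset V).filter (· ∈ X)) ((univ : Finset V).filter (· ∈ Y)) := by
      rw [Finset.disjoint_left]
      intro x hx hy
      rw [Finset.mem_filter] at hx hy
      exact Set.disjoint_left.mp hXY hx.2 hy.2
    have d2 : Disjoint ((univ : Finset V).filter (· ∈ X ∪ Y)) ((univ : Finset V).filter (· ∈ Z)) := by
      rw [Finset.disjoint_left]
      intro x hx hz
      rw [Finset.mem_filter] at hx hz
      rcases hx.2 with h | h
      · exact Set.disjoint_left.mp hXZ h hz.2
      · exact Set.disjoint_left.mp hYZ h hz.2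
    calc (univ : Finset V).card = ((univ : Finset V).filter (· ∈ X ∪ Y ∪ Z)).card := by rw [e0]
      _ = ((univ : Finset V).filter (· ∈ X ∪ Y)).card + ((univ : Finset V).filter (· ∈ Z)).card := by
          rw [e2, Finset.card_union_of_disjoint d2]
      _ = _ := by rw [e1, Finset.card_union_of_disjoint d1]
  -- edge count
  have hpc2 : pc G (univ : Finset V) = 2 * G.edgeFinset.card := by
    unfold pc
    rw [← SimpleGraph.sum_degrees_eq_twice_card_edges]
    apply Finset.sum_congr rfl
    intro u _
    rw [Finset.sum_boole, Nat.cast_id]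
    simp [SimpleGraph.degree, SimpleGraph.neighborFinset_eq_filter]
  have hecard : (G.edgeSet.ncard : ℝ) = (G.edgeFinset.card : ℝ) := by
    norm_cast
    rw [Set.ncard_eq_toFinset_card']
    exact congrArg Finset.card (by ext; simp)
  -- real abbreviations
  set nR : ℝ := (Y.ncard : ℝ) with hnR
  set mR : ℝ := (X.ncard : ℝ) with hmR
  set pR : ℝ := (Z.ncard : ℝ) with hpR
  set NR : ℝ := ((univ : Finset V).card : ℝ) with hNR
  have hNR' : NR = mR + nR + pR := by
    rw [hNR, hmR, hnR, hpR, hNsum, hXc, hYc, hZc]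
    push_cast
    ring
  have htm : (t : ℝ) * mR ≤ nR := by
    have hrt : (r : ℝ) - 3 = (t : ℝ) := by
      rw [ht_def]
      push_cast [Nat.cast_sub (by omega : 3 ≤ r)]
      ring
    rw [hrt] at h1
    have ht0 : (0:ℝ) < (t:ℝ) := by
      have : (1:ℝ) ≤ (t:ℝ) := by exact_mod_cast ht1
      linarith
    rw [le_div_iff₀ ht0] at h1
    rw [hmR, hnR]
    linarith [h1]
  have hpm : pR ≤ mR := by
    rw [hpR, hmR]
    exact_mod_cast h2
  -- Cauchy-Schwarz
  have hsplitsum : (∑ i ∈ range (t+2), s i) = (∑ i ∈ range t, s i) + s t + s (t+1) := by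
    rw [Finset.sum_range_succ, Finset.sum_range_succ]
  have hsplitsq : (∑ i ∈ range (t+2), (s i)^2)
      = (∑ i ∈ range t, (s i)^2) + (s t)^2 + (s (t+1))^2 := by
    rw [Finset.sum_range_succ, Finset.sum_range_succ]
  have hCS : (∑ i ∈ range t, s i)^2 ≤ (t:ℝ) * ∑ i ∈ range t, (s i)^2 := by
    have := sq_sum_le_card_mul_sum_sq (s := range t) (f := s)
    simpa using this
  -- scalar inequality
  have hA : (∑ i ∈ range t, s i) = nR + mR + pR - s t - s (t+1) := by
    have := hssum
    rw [hsplitsum] at this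
    have hNR2 : NR = nR + mR + pR := by rw [hNR']; ring
    linarith [this]
  have hvp : s (t+1) ≤ pR := by
    rw [hpR, hZc]
    exact hscap1
  have huv : s t + s (t+1) ≤ mR + pR := by
    rw [hmR, hpR, hXc, hZc]
    exact hscap2
  have hscalar := scalar_ineq (t:ℝ) nR mR pR (s t) (s (t+1)) (∑ i ∈ range t, s i)
    (by exact_mod_cast ht1) (hs0 t) (hs0 (t+1)) hvp huv htm hpm hA
  -- combine
  have hkey : (t:ℝ) * (2 * (G.edgeFinset.card : ℝ))
      ≤ (t:ℝ) * NR^2 - nR^2 - (t:ℝ)*mR^2 - (t:ℝ)*pR^2 := by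
    have h2e : (2 * (G.edgeFinset.card : ℝ)) = (pc G (univ : Finset V) : ℝ) := by
      rw [hpc2]
      push_cast
      ring
    rw [h2e]
    have ht0 : (0:ℝ) ≤ (t:ℝ) := by positivity
    have hstep : (t:ℝ) * (pc G (univ : Finset V) : ℝ)
        ≤ (t:ℝ) * (NR^2 - ∑ i ∈ range (t+2), (s i)^2) :=
      mul_le_mul_of_nonneg_left hsPC ht0
    have hsq : (t:ℝ) * (∑ i ∈ range (t+2), (s i)^2)
        ≥ nR^2 + (t:ℝ)*mR^2 + (t:ℝ)*pR^2 := by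
      rw [hsplitsq]
      have expand : (t:ℝ) * ((∑ i ∈ range t, (s i)^2) + (s t)^2 + (s (t+1))^2)
          = (t:ℝ) * (∑ i ∈ range t, (s i)^2) + (t:ℝ)*(s t)^2 + (t:ℝ)*(s (t+1))^2 := by ring
      rw [expand]
      calc nR^2 + (t:ℝ)*mR^2 + (t:ℝ)*pR^2
          ≤ (∑ i ∈ range t, s i)^2 + (t:ℝ)*(s t)^2 + (t:ℝ)*(s (t+1))^2 := hscalar
        _ ≤ (t:ℝ) * (∑ i ∈ range t, (s i)^2) + (t:ℝ)*(s t)^2 + (t:ℝ)*(s (t+1))^2 := by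
            linarith [hCS]
    have hring : (t:ℝ) * (NR^2 - ∑ i ∈ range (t+2), (s i)^2)
        = (t:ℝ)*NR^2 - (t:ℝ)*(∑ i ∈ range (t+2), (s i)^2) := by ring
    rw [hring] at hstep
    linarith [hstep, hsq]
  -- final algebra
  have hrt : (r : ℝ) - 3 = (t : ℝ) := by
    rw [ht_def]
    push_cast [Nat.cast_sub (by omega : 3 ≤ r)]
    ring
  have hrt4 : (r : ℝ) - 4 = (t : ℝ) - 1 := by rw [← hrt]; ring
  rw [hecard, hrt, hrt4]
  have ht0 : (0:ℝ) < (t:ℝ) := by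
    have : (1:ℝ) ≤ (t:ℝ) := by exact_mod_cast ht1
    linarith
  have h2t : (0:ℝ) < 2*(t:ℝ) := by linarith
  rw [show ((t:ℝ)-1) / (2*(t:ℝ)) * nR^2 + mR*nR + nR*pR + pR*mR
      = (((t:ℝ)-1)*nR^2 + 2*(t:ℝ)*(mR*nR + nR*pR + pR*mR)) / (2*(t:ℝ)) from by
    field_simp
    ring]
  rw [le_div_iff₀ h2t]
  have hExp : (t:ℝ) * NR^2 - nR^2 - (t:ℝ)*mR^2 - (t:ℝ)*pR^2
      = ((t:ℝ)-1)*nR^2 + 2*(t:ℝ)*(mR*nR + nR*pR + pR*mR) := by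
    rw [hNR']
    ring
  rw [hExp] at hkey
  linarith [hkey]
end

section
/- Let r ≥ 4 be an integer and let δ be a real number with (2r-5)/(2r-2) ≤ δ ≤ (5r-13)/(5r-8). Let x, y ∈ [0,1] be reals satisfying y ≤ (r-3)(1-δ) and x/2 + y ≥ δ, and define g(x,y) = x(1-x) + y(1-x-y) + (r-4)/(2(r-3))·y². Then g(x,y) ≤ (-4(r-1)δ² + 4(2r-5)δ + r - 3)/(10r-28). -/
theorem stmt_10 (r : ℕ) (hr : 4 ≤ r) (δ : ℝ)
    (hδl : (2 * (r : ℝ) - 5) / (2 * (r : ℝ) - 2) ≤ δ)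
    (hδu : δ ≤ (5 * (r : ℝ) - 13) / (5 * (r : ℝ) - 8))
    (x y : ℝ) (hx0 : 0 ≤ x) (hx1 : x ≤ 1) (hy0 : 0 ≤ y) (hy1 : y ≤ 1)
    (hy : y ≤ ((r : ℝ) - 3) * (1 - δ)) (hxy : δ ≤ x / 2 + y) :
    x * (1 - x) + y * (1 - x - y) + ((r : ℝ) - 4) / (2 * ((r : ℝ) - 3)) * y ^ 2
      ≤ (-4 * ((r : ℝ) - 1) * δ ^ 2 + 4 * (2 * (r : ℝ) - 5) * δ + (r : ℝ) - 3)
        / (10 * (r : ℝ) - 28) := by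
  have hR : (4 : ℝ) ≤ (r : ℝ) := by exact_mod_cast hr
  set R : ℝ := (r : ℝ) with hRdef
  have h3 : (0 : ℝ) < R - 3 := by linarith
  have h514 : (0 : ℝ) < 5 * R - 14 := by linarith
  have h1028 : (0 : ℝ) < 10 * R - 28 := by linarith
  have h2R2 : (0 : ℝ) < 2 * R - 2 := by linarith
  -- multiplier nonnegativity
  have hμ : 0 ≤ 2 * δ * (R - 1) - (2 * R - 5) := by
    have := (div_le_iff₀ h2R2).mp hδl
    linarith
  have hμ' : 0 ≤ 2 * (2 * δ * (R - 1) - (2 * R - 5)) / (5 * R - 14) :=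
    div_nonneg (by linarith) (le_of_lt h514)
  have hxy' : 0 ≤ x / 2 + y - δ := by linarith
  have hterm1 : 0 ≤ 2 * (2 * δ * (R - 1) - (2 * R - 5)) / (5 * R - 14) *
      (x / 2 + y - δ) := mul_nonneg hμ' hxy'
  set X : ℝ := x - 2 * ((R - 3) - δ * (R - 4)) / (5 * R - 14) with hX
  set Y : ℝ := y - (R - 3) * (6 * δ - 1) / (5 * R - 14) with hY
  have hterm2 : 0 ≤ (X + Y / 2) ^ 2 := sq_nonneg _
  have hterm3 : 0 ≤ (R - 1) / (4 * (R - 3)) * Y ^ 2 :=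
    mul_nonneg (div_nonneg (by linarith) (by linarith)) (sq_nonneg _)
  have key : (-4 * (R - 1) * δ ^ 2 + 4 * (2 * R - 5) * δ + R - 3) / (10 * R - 28)
      - (x * (1 - x) + y * (1 - x - y) + (R - 4) / (2 * (R - 3)) * y ^ 2)
      = 2 * (2 * δ * (R - 1) - (2 * R - 5)) / (5 * R - 14) * (x / 2 + y - δ)
        + (X + Y / 2) ^ 2 + (R - 1) / (4 * (R - 3)) * Y ^ 2 := by
    rw [hX, hY]
    field_simp [show R * 5 - 14 ≠ 0 by linarith, show R * 10 - 28 ≠ 0 by linarith, h3.ne']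
    ring
  linarith [key, hterm1, hterm2, hterm3]
end

section
/- Let r ≥ 4 be an integer and let δ be a real number with (5r-13)/(5r-8) ≤ δ ≤ (2r-5)/(2r-3). Let x, y ∈ [0,1] be reals satisfying y ≤ (r-3)(1-δ) and x/2 + y ≥ δ, and define g(x,y) = x(1-x) + y(1-x-y) + (r-4)/(2(r-3))·y². Then g(x,y) ≤ ((-5r²+17r-14)δ² + (10r²-44r+46)δ - 5r² + 27r - 36)/2. -/
theorem stmt_11 (r : ℕ) (hr : 4 ≤ r) (δ : ℝ)
    (hδl : (5 * (r : ℝ) - 13) / (5 * (r : ℝ) - 8) ≤ δ)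
    (hδu : δ ≤ (2 * (r : ℝ) - 5) / (2 * (r : ℝ) - 3))
    (x y : ℝ) (hx0 : 0 ≤ x) (hx1 : x ≤ 1) (hy0 : 0 ≤ y) (hy1 : y ≤ 1)
    (hy : y ≤ ((r : ℝ) - 3) * (1 - δ)) (hxy : δ ≤ x / 2 + y) :
    x * (1 - x) + y * (1 - x - y) + ((r : ℝ) - 4) / (2 * ((r : ℝ) - 3)) * y ^ 2
      ≤ ((-5 * (r : ℝ) ^ 2 + 17 * r - 14) * δ ^ 2 + (10 * (r : ℝ) ^ 2 - 44 * r + 46) * δ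
          - 5 * (r : ℝ) ^ 2 + 27 * r - 36) / 2 := by
  have hR : (4 : ℝ) ≤ (r : ℝ) := by exact_mod_cast hr
  have h3 : (0 : ℝ) < (r : ℝ) - 3 := by linarith
  have h58 : (0 : ℝ) < 5 * (r : ℝ) - 8 := by linarith
  have h35 : (0 : ℝ) < 3 * (r : ℝ) - 5 := by linarith
  have hl : 5 * (r : ℝ) - 13 ≤ δ * (5 * (r : ℝ) - 8) := by
    have := (div_le_iff₀ h58).mp hδl; linarith
  -- derive δ*(3R-5) ≥ 3R-8
  have hl2 : 3 * (r : ℝ) - 8 ≤ δ * (3 * (r : ℝ) - 5) := by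
    nlinarith [mul_pos h58 h35, mul_le_mul_of_nonneg_right hl h35.le]
  have hu : 0 ≤ ((r : ℝ) - 3) * (1 - δ) - y := by linarith
  have hv : 0 ≤ x / 2 + y - δ := by linarith
  have hAu : 0 ≤ δ * (5 * (r : ℝ) - 8) - (5 * (r : ℝ) - 13) := by linarith
  have hAv : 0 ≤ δ * (3 * (r : ℝ) - 5) - (3 * (r : ℝ) - 8) := by linarith
  have h2 : (0 : ℝ) < 2 * ((r : ℝ) - 3) := by linarith
  rw [← mul_le_mul_iff_right₀ h2]
  have hfrac : 2 * ((r : ℝ) - 3) * (((r : ℝ) - 4) / (2 * ((r : ℝ) - 3)) * y ^ 2)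
      = ((r : ℝ) - 4) * y ^ 2 := by
    field_simp
  have key : 2 * ((r : ℝ) - 3) *
      (((-5 * (r : ℝ) ^ 2 + 17 * r - 14) * δ ^ 2 + (10 * (r : ℝ) ^ 2 - 44 * r + 46) * δ
          - 5 * (r : ℝ) ^ 2 + 27 * r - 36) / 2)
      - (2 * ((r : ℝ) - 3) * (x * (1 - x) + y * (1 - x - y)) + ((r : ℝ) - 4) * y ^ 2)
      = 4 * ((x / 2 + y - δ) * (δ * (3 * (r : ℝ) - 5) - (3 * (r : ℝ) - 8)) * ((r : ℝ) - 3))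
        + 2 * ((((r : ℝ) - 3) * (1 - δ) - y) * (δ * (5 * (r : ℝ) - 8) - (5 * (r : ℝ) - 13))
            * ((r : ℝ) - 3))
        + 8 * (((r : ℝ) - 3) * (x / 2 + y - δ) ^ 2)
        + 12 * (((r : ℝ) - 3) * ((((r : ℝ) - 3) * (1 - δ) - y) * (x / 2 + y - δ)))
        + 5 * (((r : ℝ) - 3) * ((((r : ℝ) - 3) * (1 - δ) - y) ^ 2))
        + (((r : ℝ) - 3) * (1 - δ) - y) ^ 2 := by ring
  have t1 := mul_nonneg (mul_nonneg hv hAv) h3.le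
  have t2 := mul_nonneg (mul_nonneg hu hAu) h3.le
  have t3 := mul_nonneg h3.le (sq_nonneg (x / 2 + y - δ))
  have t4 := mul_nonneg h3.le (mul_nonneg hu hv)
  have t5 := sq_nonneg (((r : ℝ) - 3) * (1 - δ) - y)
  have t6 := mul_nonneg h3.le (sq_nonneg (((r : ℝ) - 3) * (1 - δ) - y))
  have hexp : 2 * ((r : ℝ) - 3) *
      (x * (1 - x) + y * (1 - x - y) + ((r : ℝ) - 4) / (2 * ((r : ℝ) - 3)) * y ^ 2)
      = 2 * ((r : ℝ) - 3) * (x * (1 - x) + y * (1 - x - y)) + ((r : ℝ) - 4) * y ^ 2 := by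
    rw [mul_add, hfrac]
  rw [hexp]
  linarith [key, t1, t2, t3, t4, t5, t6]
end

section
/- Let r ≥ 2 be an integer and let B be a bipartite graph with parts P and Q, where |P| = p ≤ r-2 and |Q| = q ≤ r-3. Suppose that for every nonempty S ⊆ Q and every nonempty T ⊆ P with |S| + |T| ≥ r-1 there is at least one edge of B between S and T. Then B contains a matching of size at least p + q - r + 2. -/
open SimpleGraph Finset

/-- Build a matching from an injection with adjacency. -/
lemma match_of_inj_13 {V : Type*} [Fintype V] [DecidableEq V] (B : SimpleGraph V)
    (g : V → V) :
    ∀ (Q₀ : Finset V), (∀ s ∈ Q₀, B.Adj s (g s)) → Set.InjOn g ↑Q₀ →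
    (∀ s ∈ Q₀, ∀ t ∈ Q₀, g s ≠ t) →
    ∃ M : B.Subgraph, M.IsMatching ∧ (M.support ⊆ (↑Q₀ : Set V) ∪ g '' ↑Q₀) ∧
      M.edgeSet.ncard = Q₀.card := by
  intro Q₀
  induction Q₀ using Finset.induction_on with
  | empty =>
    intro _ _ _
    refine ⟨⊥, ?_, ?_, ?_⟩
    · intro v hv; simp at hv
    · intro v hv; rcases hv with ⟨w, hw⟩; simp at hw
    · have : (⊥ : B.Subgraph).edgeSet = ∅ := by
        ext e; induction e using Sym2.ind with
        | _ a b => simp [SimpleGraph.Subgraph.mem_edgeSet]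
      rw [this]; simp
  | insert _ _ hsQ ih =>
    rename_i s Q₀
    intro hadj hinj hcross
    obtain ⟨M', hM', hsup', hcard'⟩ := ih
      (fun x hx => hadj x (Finset.mem_insert_of_mem hx))
      (hinj.mono (Finset.coe_subset.mpr (Finset.subset_insert s Q₀)))
      (fun x hx y hy => hcross x (Finset.mem_insert_of_mem hx) y (Finset.mem_insert_of_mem hy))
    have hst : B.Adj s (g s) := hadj s (Finset.mem_insert_self s Q₀)
    have hsns : s ∉ M'.support ∧ g s ∉ M'.support := by
      constructor
      · intro h
        rcases hsup' h with h' | ⟨x, hx, hgx⟩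
        · exact hsQ (Finset.mem_coe.mp h')
        · exact hcross x (Finset.mem_insert_of_mem hx) s (Finset.mem_insert_self s Q₀) hgx
      · intro h
        rcases hsup' h with h' | ⟨x, hx, hgx⟩
        · exact hcross s (Finset.mem_insert_self s Q₀) (g s)
            (Finset.mem_insert_of_mem (Finset.mem_coe.mp h')) rfl
        · have : x = s := hinj (Finset.mem_coe.mpr (Finset.mem_insert_of_mem hx))
            (Finset.mem_coe.mpr (Finset.mem_insert_self s Q₀)) hgx
          exact hsQ (this ▸ hx)
    have hdisj : Disjoint (B.subgraphOfAdj hst).support M'.support := by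
      rw [SimpleGraph.support_subgraphOfAdj, Set.disjoint_left]
      intro v hv
      rcases hv with rfl | rfl
      · exact hsns.1
      · exact hsns.2
    refine ⟨B.subgraphOfAdj hst ⊔ M',
      (SimpleGraph.Subgraph.IsMatching.subgraphOfAdj hst).sup hM' hdisj, ?_, ?_⟩
    · intro v hv
      rcases hv with ⟨w, hw⟩
      rcases hw with hw | hw
      · have := (B.subgraphOfAdj hst).edge_vert hw
        rw [SimpleGraph.subgraphOfAdj_verts] at this
        rcases this with rfl | rfl
        · exact Or.inl (by simp)
        · exact Or.inr ⟨s, by simp⟩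
      · rcases hsup' ⟨w, hw⟩ with h' | ⟨x, hx, hgx⟩
        · exact Or.inl (Finset.mem_coe.mpr (Finset.mem_insert_of_mem (Finset.mem_coe.mp h')))
        · exact Or.inr ⟨x, Finset.mem_coe.mpr (Finset.mem_insert_of_mem (Finset.mem_coe.mp hx)), hgx⟩
    · have hes : (B.subgraphOfAdj hst ⊔ M').edgeSet
          = insert s(s, g s) M'.edgeSet := by
        rw [SimpleGraph.Subgraph.edgeSet_sup, SimpleGraph.edgeSet_subgraphOfAdj]
        rw [Set.singleton_union]
      have hnotmem : s(s, g s) ∉ M'.edgeSet := by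
        intro h
        exact hsns.1 ⟨g s, SimpleGraph.Subgraph.mem_edgeSet.mp h⟩
      rw [hes, Set.ncard_insert_of_notMem hnotmem (Set.toFinite _), hcard',
        Finset.card_insert_of_notMem hsQ]

theorem stmt_13 {V : Type*} [Fintype V] [DecidableEq V] (r : ℕ) (hr : 2 ≤ r)
    (B : SimpleGraph V) (P Q : Finset V) (hPQ : Disjoint P Q)
    (hbip : ∀ a b, B.Adj a b → (a ∈ P ∧ b ∈ Q) ∨ (a ∈ Q ∧ b ∈ P))
    (hp : P.card ≤ r - 2) (hq : Q.card ≤ r - 3)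
    (hcond : ∀ S ⊆ Q, S.Nonempty → ∀ T ⊆ P, T.Nonempty →
      r - 1 ≤ S.card + T.card → ∃ s ∈ S, ∃ t ∈ T, B.Adj s t) :
    ∃ M : B.Subgraph, M.IsMatching ∧
      (P.card : ℤ) + (Q.card : ℤ) - (r : ℤ) + 2 ≤ (M.edgeSet.ncard : ℤ) := by
  classical
  set d : ℕ := r - 2 - P.card with hd
  -- Hall system
  set t : ↥Q → Finset (V ⊕ Fin d) := fun s =>
    ((P.filter (fun v => B.Adj ↑s v)).image Sum.inl) ∪
      ((Finset.univ : Finset (Fin d)).image Sum.inr) with ht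
  have hall : ∀ S : Finset ↥Q, S.card ≤ (S.biUnion t).card := by
    intro S
    rcases S.eq_empty_or_nonempty with rfl | hSne
    · simp
    · set S' : Finset V := S.image Subtype.val with hS'
      have hS'Q : S' ⊆ Q := by
        intro v hv
        rcases Finset.mem_image.mp hv with ⟨⟨x, hx⟩, _, rfl⟩
        exact hx
      have hS'ne : S'.Nonempty := hSne.image _
      have hS'card : S'.card = S.card := Finset.card_image_of_injective _ Subtype.val_injective
      set N : Finset V := P.filter (fun v => ∃ s ∈ S', B.Adj s v) with hN
      set T : Finset V := P.filter (fun v => ¬ ∃ s ∈ S', B.Adj s v) with hT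
      have hpart : N.card + T.card = P.card :=
        Finset.card_filter_add_card_filter_not _
      have hkey : S'.card ≤ N.card + d := by
        rcases T.eq_empty_or_nonempty with hTe | hTne
        · have hT0 : T.card = 0 := by rw [hTe]; exact Finset.card_empty
          have hSQ : S'.card ≤ Q.card := Finset.card_le_card hS'Q
          omega
        · have hle : ¬ (r - 1 ≤ S'.card + T.card) := by
            intro hge
            obtain ⟨s, hs, tt, htt, hadj⟩ := hcond S' hS'Q hS'ne T
              (Finset.filter_subset _ _) hTne hge
            exact (Finset.mem_filter.mp htt).2 ⟨s, hs, hadj⟩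
          have hT1 : 1 ≤ T.card := Finset.card_pos.mpr hTne
          omega
      have hsub : N.image Sum.inl ∪ (Finset.univ : Finset (Fin d)).image Sum.inr
          ⊆ S.biUnion t := by
        intro e he
        rcases Finset.mem_union.mp he with he | he
        · rcases Finset.mem_image.mp he with ⟨v, hv, rfl⟩
          rcases Finset.mem_filter.mp hv with ⟨hvP, s0, hs0, hadj⟩
          rcases Finset.mem_image.mp hs0 with ⟨s1, hs1, rfl⟩
          refine Finset.mem_biUnion.mpr ⟨s1, hs1, ?_⟩
          exact Finset.mem_union_left _
            (Finset.mem_image_of_mem _ (Finset.mem_filter.mpr ⟨hvP, hadj⟩))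
        · obtain ⟨s0, hs0⟩ := hSne
          exact Finset.mem_biUnion.mpr ⟨s0, hs0, Finset.mem_union_right _ he⟩
      have hdisj2 : Disjoint (N.image Sum.inl)
          ((Finset.univ : Finset (Fin d)).image Sum.inr) := by
        rw [Finset.disjoint_left]
        intro e he1 he2
        rcases Finset.mem_image.mp he1 with ⟨v, _, rfl⟩
        rcases Finset.mem_image.mp he2 with ⟨x, _, hx⟩
        exact Sum.inl_ne_inr hx.symm
      have hcu : (N.image Sum.inl ∪
          (Finset.univ : Finset (Fin d)).image Sum.inr).card = N.card + d := by
        rw [Finset.card_union_of_disjoint hdisj2,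
          Finset.card_image_of_injective _ Sum.inl_injective,
          Finset.card_image_of_injective _ Sum.inr_injective,
          Finset.card_univ, Fintype.card_fin]
      calc S.card = S'.card := hS'card.symm
        _ ≤ N.card + d := hkey
        _ = _ := hcu.symm
        _ ≤ (S.biUnion t).card := Finset.card_le_card hsub
  obtain ⟨f, hfinj, hf⟩ := (Finset.all_card_le_biUnion_card_iff_exists_injective t).mp hall
  set A : Finset ↥Q := Finset.univ.filter (fun s => (f s).isLeft) with hA
  set Q₀ : Finset V := A.image Subtype.val with hQ₀
  have hQ₀card : Q₀.card = A.card := Finset.card_image_of_injective _ Subtype.val_injective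
  -- complement bounded by d
  have hBc : (Finset.univ.filter (fun s : ↥Q => ¬ (f s).isLeft)).card ≤ d := by
    set Bc := Finset.univ.filter (fun s : ↥Q => ¬ (f s).isLeft) with hBcdef
    rcases Bc.eq_empty_or_nonempty with hBe | ⟨s1, hs1⟩
    · simp [hBe]
    · have hs1' : ¬ (f s1).isLeft := (Finset.mem_filter.mp hs1).2
      obtain ⟨x1, hx1⟩ : ∃ x, f s1 = Sum.inr x := by
        cases hfs : f s1 with
        | inl w => rw [hfs] at hs1'; simp at hs1'
        | inr x => exact ⟨x, rfl⟩
      have := Finset.card_le_card_of_injOn (s := Bc) (t := (Finset.univ : Finset (Fin d)))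
        (f := fun s : ↥Q => ((f s).getRight?).getD x1)
        (fun a _ => Finset.mem_univ _) ?_
      · simpa using this
      · intro a ha b hb hab
        have ha' : ¬ (f a).isLeft := (Finset.mem_filter.mp ha).2
        have hb' : ¬ (f b).isLeft := (Finset.mem_filter.mp hb).2
        obtain ⟨xa, hxa⟩ : ∃ x, f a = Sum.inr x := by
          cases hfs : f a with
          | inl w => rw [hfs] at ha'; simp at ha'
          | inr x => exact ⟨x, rfl⟩
        obtain ⟨xb, hxb⟩ : ∃ x, f b = Sum.inr x := by
          cases hfs : f b with
          | inl w => rw [hfs] at hb'; simp at hb'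
          | inr x => exact ⟨x, rfl⟩
        simp only [hxa, hxb, Sum.getRight?, Option.getD_some] at hab
        exact hfinj (by rw [hxa, hxb, hab])
  have hcards : A.card + (Finset.univ.filter (fun s : ↥Q => ¬ (f s).isLeft)).card
      = Q.card := by
    rw [hA, Finset.card_filter_add_card_filter_not, Finset.card_univ,
      Fintype.card_coe]
  -- the partner function
  set g : V → V := fun v =>
    if h : v ∈ Q then Sum.elim id (fun _ => v) (f ⟨v, h⟩) else v with hg
  have hkey : ∀ v ∈ Q₀, ∃ (hv : v ∈ Q), f ⟨v, hv⟩ = Sum.inl (g v)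
      ∧ g v ∈ P ∧ B.Adj v (g v) := by
    intro v hv
    rcases Finset.mem_image.mp hv with ⟨⟨v', hv'Q⟩, hv'A, rfl⟩
    refine ⟨hv'Q, ?_⟩
    have hleft : (f ⟨v', hv'Q⟩).isLeft := (Finset.mem_filter.mp hv'A).2
    obtain ⟨w, hw⟩ : ∃ w, f ⟨v', hv'Q⟩ = Sum.inl w := by
      cases hfs : f ⟨v', hv'Q⟩ with
      | inl w => exact ⟨w, rfl⟩
      | inr x => rw [hfs] at hleft; simp at hleft
    have hgv : g v' = w := by
      rw [hg]; simp only [dif_pos hv'Q, hw, Sum.elim_inl, id]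
    have hmem := hf ⟨v', hv'Q⟩
    rw [ht] at hmem
    simp only [hw] at hmem
    rcases Finset.mem_union.mp hmem with hm | hm
    · rcases Finset.mem_image.mp hm with ⟨w', hw', hww⟩
      have : w' = w := Sum.inl_injective hww
      subst this
      rcases Finset.mem_filter.mp hw' with ⟨hwP, hadj⟩
      exact ⟨by rw [hgv]; exact hw, by rw [hgv]; exact hwP, by rw [hgv]; exact hadj⟩
    · rcases Finset.mem_image.mp hm with ⟨x, _, hx⟩
      exact absurd hx (Sum.inr_ne_inl)
  obtain ⟨M, hM, _, hMcard⟩ := match_of_inj_13 B g Q₀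
    (fun s hs => (hkey s hs).choose_spec.2.2)
    (by
      intro x hx y hy hxy
      obtain ⟨hxQ, hfx, _, _⟩ := hkey x (Finset.mem_coe.mp hx)
      obtain ⟨hyQ, hfy, _, _⟩ := hkey y (Finset.mem_coe.mp hy)
      have : f ⟨x, hxQ⟩ = f ⟨y, hyQ⟩ := by rw [hfx, hfy, hxy]
      exact congrArg Subtype.val (hfinj this))
    (by
      intro x hx y hy hgxy
      obtain ⟨_, _, hgP, _⟩ := hkey x hx
      have hyQ : y ∈ Q := by
        rcases Finset.mem_image.mp hy with ⟨⟨y', hy'⟩, _, rfl⟩; exact hy'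
      exact (Finset.disjoint_left.mp hPQ (hgxy ▸ hgP)) hyQ)
  refine ⟨M, hM, ?_⟩
  rw [hMcard, hQ₀card]
  have hdz : (d : ℤ) = (r : ℤ) - 2 - (P.card : ℤ) := by
    have : P.card ≤ r - 2 := hp
    omega
  omega
end

section
/- Let r and t be integers with 2 ≤ t ≤ r-1, let n be a positive integer, and let a be an integer with (t-1)n/(r-1) ≤ a ≤ n-1. Define φ(a) = e(T_{t-1}(a)) + e(T_{r-t}(n-a)) + a(n-a), the number of edges of the join T_{t-1}(a) ∨ T_{r-t}(n-a). Then φ(a+1) ≤ φ(a). -/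
open SimpleGraph Finset

lemma count_res (m k : ℕ) (hk : 0 < k) :
    #{x ∈ Finset.range m | x % k = m % k} = m / k := by
  have := Nat.count_modEq_card m hk m
  rw [Nat.count_eq_card_filter_range] at this
  simp only [if_neg (lt_irrefl _), add_zero] at this
  exact this

lemma deg_last (m k : ℕ) (hk : 0 < k) :
    (turanGraph (m+1) k).degree (Fin.last m) = m - m / k := by
  classical
  rw [← card_neighborFinset_eq_degree]
  have h1 : (turanGraph (m+1) k).neighborFinset (Fin.last m)
      = Finset.univ.filter (fun x : Fin (m+1) => ¬ ((x:ℕ) % k = m % k)) := by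
    ext x
    simp only [mem_neighborFinset, Finset.mem_filter, Finset.mem_univ, true_and]
    constructor
    · intro h; exact fun hx => h.symm (by simpa [Fin.val_last] using hx)
    · intro h; exact fun hx => h (by simpa [Fin.val_last] using hx.symm)
  rw [h1, Finset.filter_not, Finset.card_sdiff_of_subset (Finset.filter_subset _ _)]
  have h2 : #({x : Fin (m+1) | (x:ℕ) % k = m % k} : Finset (Fin (m+1)))
      = #{x ∈ Finset.range (m+1) | x % k = m % k} := by
    rw [← Nat.Iio_eq_range, ← Fin.map_valEmbedding_univ, Finset.filter_map, Finset.card_map]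
    rfl
  have h3 : #{x ∈ Finset.range (m+1) | x % k = m % k} = m / k + 1 := by
    rw [Finset.range_add_one, Finset.filter_insert, if_pos rfl,
      Finset.card_insert_of_notMem (by simp), count_res m k hk]
  simp only [Finset.card_univ, Fintype.card_fin]
  omega

lemma edge_rec (m k : ℕ) (hk : 0 < k) :
    #(turanGraph (m+1) k).edgeFinset
      = #(turanGraph m k).edgeFinset + (m - m / k) := by
  classical
  set G := turanGraph (m+1) k with hG
  have hsplit := Finset.card_filter_add_card_filter_not
    (s := G.edgeFinset) (p := fun e => Fin.last m ∈ e)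
  have hA : #{e ∈ G.edgeFinset | Fin.last m ∈ e} = m - m / k := by
    rw [← incidenceFinset_eq_filter, card_incidenceFinset_eq_degree, deg_last m k hk]
  have hB : #{e ∈ G.edgeFinset | ¬ Fin.last m ∈ e} = #(turanGraph m k).edgeFinset := by
    symm
    apply Finset.card_bij (fun e _ => Sym2.map Fin.castSucc e)
    · intro e he
      induction e with
      | _ u v =>
        simp only [mem_edgeFinset, mem_edgeSet] at he
        simp only [Sym2.map_pair_eq, Finset.mem_filter, mem_edgeFinset, mem_edgeSet,
          Sym2.mem_iff, not_or]
        refine ⟨?_, (Fin.castSucc_lt_last u).ne', (Fin.castSucc_lt_last v).ne'⟩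
        intro h
        exact he (by simpa [Fin.coe_castSucc] using h)
    · intro e₁ h₁ e₂ h₂ h
      exact Sym2.map.injective (Fin.castSucc_injective m) h
    · intro e he
      induction e with
      | _ u v =>
        simp only [Finset.mem_filter, mem_edgeFinset, mem_edgeSet, Sym2.mem_iff, not_or] at he
        obtain ⟨hadj, hu, hv⟩ := he
        obtain ⟨u', rfl⟩ := Fin.exists_castSucc_eq.mpr (Ne.symm hu)
        obtain ⟨v', rfl⟩ := Fin.exists_castSucc_eq.mpr (Ne.symm hv)
        refine ⟨s(u', v'), ?_, rfl⟩
        simp only [mem_edgeFinset, mem_edgeSet]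
        intro h
        exact hadj (by simpa [Fin.coe_castSucc] using h)
  rw [← hsplit, hA, hB, Nat.add_comm]

lemma ncard_eq (N K : ℕ) : (turanGraph N K).edgeSet.ncard = #(turanGraph N K).edgeFinset := by
  rw [← coe_edgeFinset, Set.ncard_coe_finset]

theorem stmt_14 (r t n a : ℕ) (ht : 2 ≤ t) (htr : t ≤ r - 1) (hn : 0 < n)
    (hal : ((t : ℝ) - 1) * (n : ℝ) / ((r : ℝ) - 1) ≤ (a : ℝ)) (hau : a ≤ n - 1) :
    (turanGraph (a + 1) (t - 1)).edgeSet.ncard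
        + (turanGraph (n - (a + 1)) (r - t)).edgeSet.ncard + (a + 1) * (n - (a + 1))
      ≤ (turanGraph a (t - 1)).edgeSet.ncard
        + (turanGraph (n - a) (r - t)).edgeSet.ncard + a * (n - a) := by
  have hr3 : 3 ≤ r := by omega
  have hk1 : 0 < t - 1 := by omega
  have hk2 : 0 < r - t := by omega
  have han : a + 1 ≤ n := by omega
  have h1 : (t - 1) * n ≤ (r - 1) * a := by
    have hr1 : (0:ℝ) < (r:ℝ) - 1 := by
      have : (3:ℝ) ≤ (r:ℝ) := by exact_mod_cast hr3
      linarith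
    rw [div_le_iff₀ hr1] at hal
    have h2 : ((t-1:ℕ):ℝ) * (n:ℝ) ≤ ((r-1:ℕ):ℝ) * (a:ℝ) := by
      push_cast [Nat.cast_sub (by omega : 1 ≤ t), Nat.cast_sub (by omega : 1 ≤ r)]
      linarith
    exact_mod_cast h2
  set b := n - (a+1) with hbdef
  have hbn : b + (a+1) = n := by omega
  have hb : (t-1) * b ≤ (r-t) * a := by
    have e1 : (t-1) * n = (t-1)*b + (t-1)*a + (t-1) := by rw [← hbn]; ring
    have e2 : (r-1) * a = (r-t)*a + (t-1)*a := by
      have hrt : r - 1 = (r-t) + (t-1) := by omega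
      rw [hrt]; ring
    rw [e1] at h1; rw [e2] at h1
    omega
  have hdiv : b / (r-t) ≤ a / (t-1) := by
    rw [Nat.le_div_iff_mul_le hk1]
    refine Nat.le_of_mul_le_mul_right ?_ hk2
    calc b/(r-t) * (t-1) * (r-t) = b/(r-t)*(r-t)*(t-1) := by ring
      _ ≤ b * (t-1) := Nat.mul_le_mul_right _ (Nat.div_mul_le_self b (r-t))
      _ = (t-1)*b := by ring
      _ ≤ (r-t)*a := hb
      _ = a * (r-t) := by ring
  have hb1 : n - a = b + 1 := by omega
  have E1 := edge_rec a (t-1) hk1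
  have E2 := edge_rec b (r-t) hk2
  rw [ncard_eq, ncard_eq, ncard_eq, ncard_eq, hb1, E1, E2]
  have hprod1 : (a+1) * b = a * b + b := by ring
  have hprod2 : a * (b+1) = a * b + a := by ring
  rw [hprod1, hprod2]
  have hd1 : a / (t-1) ≤ a := Nat.div_le_self _ _
  have hd2 : b / (r-t) ≤ b := Nat.div_le_self _ _
  omega
end

section
/- Let r ≥ 4 be an integer and define f(x,y,z) = (r-4)/(2(r-3))·y² + xy + yz + zx for real numbers x, y, z. If x, y, z ≥ 0 satisfy y/(r-3) ≥ x > z, then f(x,y,z) ≥ f(x-1, y+1, z) and f(x,y,z) ≥ f(x, y+1, z-1). -/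
theorem stmt_15 (r : ℕ) (hr : 4 ≤ r) (x y z : ℝ)
    (hx : 0 ≤ x) (hy : 0 ≤ y) (hz : 0 ≤ z)
    (h1 : x ≤ y / ((r : ℝ) - 3)) (h2 : z < x) :
    (let f : ℝ → ℝ → ℝ → ℝ := fun x y z =>
      ((r : ℝ) - 4) / (2 * ((r : ℝ) - 3)) * y ^ 2 + x * y + y * z + z * x
    f (x - 1) (y + 1) z ≤ f x y z ∧ f x (y + 1) (z - 1) ≤ f x y z) := by
  intro f
  have hr4 : (4:ℝ) ≤ (r:ℝ) := by exact_mod_cast hr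
  have ht : 0 < (r:ℝ) - 3 := by linarith
  have h1' : x * ((r:ℝ) - 3) ≤ y := by
    rwa [le_div_iff₀ ht] at h1
  have hd : ((r:ℝ) - 4) * (2 * y + 1) ≤ 2 * ((r:ℝ) - 3) * (y + 1 - x) := by
    nlinarith
  have hc : ((r:ℝ) - 4) / (2 * ((r:ℝ) - 3)) * (2 * y + 1) ≤ y + 1 - x := by
    rw [div_mul_eq_mul_div, div_le_iff₀ (by linarith : 0 < 2 * ((r:ℝ) - 3))]
    linarith [hd]
  set c := ((r:ℝ) - 4) / (2 * ((r:ℝ) - 3)) with hcdef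
  constructor
  · show c * (y+1)^2 + (x-1)*(y+1) + (y+1)*z + z*(x-1) ≤ c * y^2 + x*y + y*z + z*x
    nlinarith [hc]
  · show c * (y+1)^2 + x*(y+1) + (y+1)*(z-1) + (z-1)*x ≤ c * y^2 + x*y + y*z + z*x
    nlinarith [hc]
end
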